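/- arXiv:0804.4548 — 8 statements merged into one kernel-verified Lean document; each statement's English description precedes it below -/
import Mathlib

section
/- There exists a function r from the finite subsets of ω₁ to ω such that for all finite subsets A, B of ω₁, if r(A) = r(B) then A ∩ B is an initial segment of both A and B (i.e., every element of A ∩ B is less than every element of A \ B and every element of B \ A). -/
noncomputable section
open Set

/-- The first uncountable ordinal `ω₁`. -/
def w1 : Ordinal.{0} := (Cardinal.aleph 1).ord

private lemma countable_Iio_of_lt_w1 {α : Ordinal.{0}} (h : α < w1) :
    (Set.Iio α).Countable := by
  rw [Cardinal.countable_iff_lt_aleph_one, Ordinal.mk_Iio_ordinal]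
  have h1 : α.card < Cardinal.aleph 1 := Cardinal.lt_ord.mp h
  have h2 := Cardinal.lift_lt.{0,1}.mpr h1
  rwa [Cardinal.lift_aleph, Ordinal.lift_one] at h2

private lemma exists_f : ∃ f : Ordinal.{0} → Ordinal.{0} → ℕ,
    ∀ α, α < w1 → ∀ β, β < α → ∀ γ, γ < α → f α β = f α γ → β = γ := by
  classical
  have H : ∀ α : Ordinal.{0}, ∃ g : Ordinal.{0} → ℕ,
      α < w1 → ∀ β, β < α → ∀ γ, γ < α → g β = g γ → β = γ := by
    intro α
    by_cases h : α < w1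
    · obtain ⟨g, hg⟩ := Set.countable_iff_exists_injOn.mp (countable_Iio_of_lt_w1 h)
      exact ⟨g, fun _ β hβ γ hγ heq => hg hβ hγ heq⟩
    · exact ⟨fun _ => 0, fun h' => absurd h' h⟩
  choose f hf using H
  exact ⟨f, hf⟩

private lemma exists_c : ∃ c : Ordinal.{0} → ℕ → Bool,
    ∀ α, α < w1 → ∀ β, β < w1 → c α = c β → α = β := by
  classical
  have hle : Cardinal.lift.{0} (Cardinal.mk (Set.Iio w1)) ≤
      Cardinal.lift.{1} (Cardinal.mk (ℕ → Bool)) := by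
    rw [Cardinal.lift_id', Ordinal.mk_Iio_ordinal, Cardinal.mk_arrow, Cardinal.mk_bool]
    have : w1.card = Cardinal.aleph 1 := Cardinal.card_ord _
    rw [this, Cardinal.lift_aleph, Ordinal.lift_one]
    simp only [Cardinal.lift_id', Cardinal.mk_nat, Cardinal.lift_aleph0,
      Cardinal.lift_natCast]
    rw [Cardinal.two_power_aleph0, Cardinal.lift_continuum]
    exact Cardinal.aleph_one_le_continuum
  obtain ⟨e⟩ := Cardinal.lift_mk_le'.mp hle
  refine ⟨fun β => if h : β < w1 then e ⟨β, h⟩ else fun _ => false,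
    fun α hα β hβ heq => ?_⟩
  simp only [dif_pos hα, dif_pos hβ] at heq
  exact congrArg Subtype.val (e.injective heq)

/-- There is a function `r` from the finite subsets of `ω₁` to `ω` such that
whenever `r A = r B`, the intersection `A ∩ B` is an initial segment of both `A` and `B`:
every element of `A ∩ B` is less than every element of `A \ B` and of `B \ A`. -/
theorem exists_coding_initial_segment :
    ∃ r : Finset Ordinal.{0} → ℕ,
      ∀ A B : Finset Ordinal.{0}, (∀ a ∈ A, a < w1) → (∀ b ∈ B, b < w1) →
        r A = r B →
        ∀ α, α ∈ A → α ∈ B →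
          (∀ β ∈ A, β ∉ B → α < β) ∧ (∀ β ∈ B, β ∉ A → α < β) := by
  classical
  obtain ⟨f, hf⟩ := exists_f
  obtain ⟨c, hc⟩ := exists_c
  -- separating truncation length
  set sep : Finset Ordinal.{0} → ℕ := fun A =>
    (A ×ˢ A).sup (fun p => if h : c p.1 = c p.2 then 0
      else Nat.find (Function.ne_iff.mp h) + 1) with hsepdef
  set trunc : ℕ → Ordinal.{0} → List Bool := fun m α => List.ofFn fun i : Fin m => c α i
    with htruncdef
  have hsep : ∀ (A : Finset Ordinal.{0}), ∀ α ∈ A, ∀ β ∈ A,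
      trunc (sep A) α = trunc (sep A) β → c α = c β := by
    intro A α hα β hβ heq
    by_contra hne
    have hmem : (α, β) ∈ A ×ˢ A := Finset.mem_product.mpr ⟨hα, hβ⟩
    have hle : Nat.find (Function.ne_iff.mp hne) + 1 ≤ sep A := by
      have h2 := Finset.le_sup (f := fun p : Ordinal.{0} × Ordinal.{0} =>
        if h : c p.1 = c p.2 then 0 else Nat.find (Function.ne_iff.mp h) + 1) hmem
      simp only [dif_neg hne] at h2
      exact h2
    have hi : Nat.find (Function.ne_iff.mp hne) < sep A := Nat.lt_of_succ_le hle
    have hfe : (fun i : Fin (sep A) => c α i) = fun i : Fin (sep A) => c β i :=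
      List.ofFn_inj.mp heq
    have := congrFun hfe ⟨_, hi⟩
    exact Nat.find_spec (Function.ne_iff.mp hne) this
  set g : Finset Ordinal.{0} → Ordinal.{0} → Finset ℕ := fun A α =>
    (A.filter (· < α)).image (f α) with hgdef
  set T : Finset Ordinal.{0} → Finset (List Bool × Finset ℕ) := fun A =>
    A.image (fun α => (trunc (sep A) α, g A α)) with hTdef
  refine ⟨fun A => Encodable.encode ((sep A, T A) : ℕ × Finset (List Bool × Finset ℕ)),
    fun A B hA hB hr α hαA hαB => ?_⟩
  have hpair : ((sep A, T A) : ℕ × Finset (List Bool × Finset ℕ)) = (sep B, T B) :=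
    Encodable.encode_injective hr
  have hm : sep A = sep B := congrArg Prod.fst hpair
  have hT : T A = T B := congrArg Prod.snd hpair
  -- key: g A α = g B α
  have hmemA : (trunc (sep A) α, g A α) ∈ T A := Finset.mem_image_of_mem _ hαA
  rw [hT] at hmemA
  obtain ⟨β, hβB, hβeq⟩ := Finset.mem_image.mp hmemA
  have h1 : trunc (sep B) β = trunc (sep B) α := by
    have h1' := congrArg Prod.fst hβeq
    rw [hm] at h1'
    exact h1'
  have hcβα : c β = c α := hsep B β hβB α hαB h1
  have hβα : β = α := hc β (hB β hβB) α (hB α hαB) hcβα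
  have hg : g A α = g B α := by
    have h2' := congrArg Prod.snd hβeq
    rw [hβα] at h2'
    exact h2'.symm
  -- key2 : filters agree
  have hαw1 : α < w1 := hA α hαA
  have key2 : A.filter (· < α) = B.filter (· < α) := by
    ext β
    simp only [Finset.mem_filter]
    constructor
    · rintro ⟨hβA, hβlt⟩
      have : f α β ∈ g B α := by
        rw [← hg, hgdef]
        exact Finset.mem_image_of_mem _ (Finset.mem_filter.mpr ⟨hβA, hβlt⟩)
      obtain ⟨γ, hγ, hγeq⟩ := Finset.mem_image.mp this
      obtain ⟨hγB, hγlt⟩ := Finset.mem_filter.mp hγ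
      have := hf α hαw1 γ hγlt β hβlt hγeq
      exact ⟨this ▸ hγB, hβlt⟩
    · rintro ⟨hβB, hβlt⟩
      have : f α β ∈ g A α := by
        rw [hg, hgdef]
        exact Finset.mem_image_of_mem _ (Finset.mem_filter.mpr ⟨hβB, hβlt⟩)
      obtain ⟨γ, hγ, hγeq⟩ := Finset.mem_image.mp this
      obtain ⟨hγA, hγlt⟩ := Finset.mem_filter.mp hγ
      have := hf α hαw1 γ hγlt β hβlt hγeq
      exact ⟨this ▸ hγA, hβlt⟩
  constructor
  · intro β hβA hβB
    rcases lt_trichotomy α β with h | h | h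
    · exact h
    · exact absurd (h ▸ hαB) hβB
    · have : β ∈ B.filter (· < α) := key2 ▸ Finset.mem_filter.mpr ⟨hβA, h⟩
      exact absurd (Finset.mem_filter.mp this).1 hβB
  · intro β hβB hβA
    rcases lt_trichotomy α β with h | h | h
    · exact h
    · exact absurd (h ▸ hαA) hβA
    · have : β ∈ A.filter (· < α) := key2.symm ▸ Finset.mem_filter.mpr ⟨hβB, h⟩
      exact absurd (Finset.mem_filter.mp this).1 hβA
end
end

section
/- There exists a function r from the finite subsets of ω₁ to ω such that for all finite nonempty subsets A, B of ω₁, if min A ≠ min B and r(A) = r(B), then A ∩ B = ∅. -/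
noncomputable section
open Set Cardinal

lemma exists_iota : ∃ f : Ordinal.{0} → ℕ → Bool,
    ∀ x y, x < w1 → y < w1 → f x = f y → x = y := by
  have hne : Nonempty (Set.Iio w1 ↪ (ℕ → Bool)) := by
    rw [← Cardinal.lift_mk_le', Ordinal.mk_Iio_ordinal]
    simp only [w1, Cardinal.card_ord, Cardinal.lift_lift, Cardinal.mk_arrow, Cardinal.mk_bool,
      Cardinal.mk_nat, Cardinal.lift_aleph0, Cardinal.lift_ofNat]
    apply Cardinal.lift_le.2
    rw [Cardinal.two_power_aleph0]
    exact Cardinal.aleph_one_le_continuum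
  obtain ⟨e⟩ := hne
  refine ⟨fun o => if h : o < w1 then e ⟨o, h⟩ else (fun _ => true), ?_⟩
  intro x y hx hy h
  simp only [dif_pos hx, dif_pos hy] at h
  exact congrArg Subtype.val (e.injective h)

def iota : Ordinal.{0} → ℕ → Bool := exists_iota.choose

lemma iota_inj {x y : Ordinal.{0}} (hx : x < w1) (hy : y < w1) (h : iota x = iota y) : x = y :=
  exists_iota.choose_spec x y hx hy h

lemma exists_g (x : Ordinal.{0}) : ∃ f : ↥(Set.Iic x) → ℕ, x < w1 → Function.Injective f := by
  by_cases hx : x < w1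
  · have hc : (Set.Iic x).Countable := by
      rw [Cardinal.countable_iff_lt_aleph_one]
      have heq : Set.Iic x = Set.Iio (x+1) := by
        ext y; simp only [Set.mem_Iic, Set.mem_Iio, Ordinal.add_one_eq_succ, Order.lt_succ_iff]
      rw [heq, Ordinal.mk_Iio_ordinal]
      have h1 : (x+1).card < Cardinal.aleph 1 := by
        rw [← Cardinal.lt_ord]
        exact (Cardinal.isSuccLimit_ord (Cardinal.aleph0_le_aleph 1)).succ_lt hx
      have h2 := (Cardinal.lift_lt.{0,1}).2 h1
      rwa [Cardinal.lift_aleph, Ordinal.lift_one] at h2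
    have : Countable ↥(Set.Iic x) := hc.to_subtype
    obtain ⟨f, hf⟩ := Countable.exists_injective_nat ↥(Set.Iic x)
    exact ⟨f, fun _ => hf⟩
  · exact ⟨fun _ => 0, fun h => absurd h hx⟩

def gfun (x m : Ordinal.{0}) : ℕ :=
  if h : m ≤ x then (exists_g x).choose ⟨m, h⟩ else 0

lemma gfun_inj {x m m' : Ordinal.{0}} (hx : x < w1) (hm : m ≤ x) (hm' : m' ≤ x)
    (h : gfun x m = gfun x m') : m = m' := by
  rw [gfun, gfun, dif_pos hm, dif_pos hm'] at h
  have := (exists_g x).choose_spec hx h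
  exact congrArg Subtype.val this

def bseq (x : Ordinal.{0}) (n : ℕ) : ℕ :=
  Encodable.encode (List.ofFn fun i : Fin n => iota x i)

lemma bseq_inj (x : Ordinal.{0}) : Function.Injective (bseq x) := by
  intro n n' h
  have := Encodable.encode_injective h
  have hlen := congrArg List.length this
  simpa using hlen

def T (x : Ordinal.{0}) : Set ℕ := Set.range (bseq x)

lemma T_ad {x y : Ordinal.{0}} (hx : x < w1) (hy : y < w1) (hxy : x ≠ y) :
    (T x ∩ T y).Finite := by
  have hne : iota x ≠ iota y := fun h => hxy (iota_inj hx hy h)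
  obtain ⟨N, hN⟩ := Function.ne_iff.1 hne
  apply Set.Finite.subset ((Set.finite_Iic N).image (bseq x))
  rintro k ⟨⟨n, rfl⟩, ⟨n', hn'⟩⟩
  have hl := Encodable.encode_injective hn'.symm
  have hlen : n = n' := by simpa using congrArg List.length hl
  subst hlen
  have hfun : (fun i : Fin n => iota x i) = fun i : Fin n => iota y i := by
    exact List.ofFn_injective hl
  have hnN : n ≤ N := by
    by_contra hgt
    push_neg at hgt
    exact hN (congrFun hfun ⟨N, hgt⟩)
  exact ⟨n, hnN, rfl⟩

def U (m x : Ordinal.{0}) : Set ℕ := Set.range (fun j => bseq x (Nat.pair (gfun x m) j))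

lemma U_subset_T (m x : Ordinal.{0}) : U m x ⊆ T x := by
  rintro k ⟨j, rfl⟩; exact ⟨_, rfl⟩

lemma U_infinite (m x : Ordinal.{0}) : (U m x).Infinite := by
  apply Set.infinite_range_of_injective
  intro j j' h
  have := bseq_inj x h
  simpa using (Nat.pair_eq_pair.1 this).2

lemma U_disj {m m' x : Ordinal.{0}} (hx : x < w1) (hm : m ≤ x) (hm' : m' ≤ x)
    {k : ℕ} (h1 : k ∈ U m x) (h2 : k ∈ U m' x) : m = m' := by
  obtain ⟨j, rfl⟩ := h1
  obtain ⟨j', hj'⟩ := h2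
  have := Nat.pair_eq_pair.1 (bseq_inj x hj')
  exact gfun_inj hx hm' hm this.1 |>.symm

def svSet (A : Finset Ordinal.{0}) (m x : Ordinal.{0}) : Set ℕ :=
  {n | n ∈ U m x ∧ ∀ y ∈ A, y ≠ x → n ∉ T y}

def sv (A : Finset Ordinal.{0}) (m x : Ordinal.{0}) : ℕ := sInf (svSet A m x)

lemma sv_mem {A : Finset Ordinal.{0}} (hA : ∀ a ∈ A, a < w1) {x : Ordinal.{0}} (hx : x ∈ A)
    (m : Ordinal.{0}) : sv A m x ∈ svSet A m x := by
  apply Nat.sInf_mem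
  have hxw : x < w1 := hA x hx
  have hF : (⋃ y ∈ A.erase x, (T y ∩ T x)).Finite := by
    apply Set.Finite.biUnion (A.erase x).finite_toSet
    intro y hy
    rw [Finset.mem_coe, Finset.mem_erase] at hy
    exact T_ad (hA y hy.2) hxw hy.1
  obtain ⟨n, hn⟩ := ((U_infinite m x).diff hF).nonempty
  refine ⟨n, hn.1, fun y hy hyx hnT => ?_⟩
  exact hn.2 (Set.mem_biUnion (Finset.mem_erase.2 ⟨hyx, hy⟩) ⟨hnT, U_subset_T m x hn.1⟩)

def SA (A : Finset Ordinal.{0}) (h : A.Nonempty) : Finset ℕ :=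
  A.image (fun x => sv A (A.min' h) x)

def rfun (A : Finset Ordinal.{0}) : ℕ :=
  if h : A.Nonempty then Encodable.encode (SA A h) else 0

/-- There is a function `r` from the finite subsets of `ω₁` to `ω` such that
for all finite nonempty `A, B ⊆ ω₁`, if `min A ≠ min B` and `r A = r B` then `A ∩ B = ∅`. -/
theorem exists_coding_disjoint :
    ∃ r : Finset Ordinal.{0} → ℕ,
      ∀ A B : Finset Ordinal.{0}, (∀ a ∈ A, a < w1) → (∀ b ∈ B, b < w1) →
        ∀ (hA : A.Nonempty) (hB : B.Nonempty), A.min' hA ≠ B.min' hB →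
          r A = r B → ∀ x ∈ A, x ∉ B := by
  refine ⟨rfun, fun A B hAw hBw hA hB hmin hr x hxA hxB => ?_⟩
  rw [rfun, rfun, dif_pos hA, dif_pos hB] at hr
  have hS : SA A hA = SA B hB := Encodable.encode_injective hr
  set mA := A.min' hA with hmA
  set mB := B.min' hB with hmB
  have hmem : sv A mA x ∈ SA B hB := by
    rw [← hS]; exact Finset.mem_image_of_mem _ hxA
  obtain ⟨z, hzB, hz⟩ := Finset.mem_image.1 hmem
  have hsvB := sv_mem hBw hzB mB
  have hsvA := sv_mem hAw hxA mA
  have hzx : z = x := by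
    by_contra hzx
    have hxz : x ≠ z := fun h => hzx h.symm
    exact hsvB.2 x hxB hxz (hz ▸ U_subset_T mA x hsvA.1)
  rw [hzx] at hzB hz hsvB
  have : mB = mA := U_disj (hAw x hxA) (Finset.min'_le B x hxB) (Finset.min'_le A x hxA)
    (hz ▸ hsvB.1) hsvA.1
  exact hmin this.symm
end
end

section
/- Let μ ≤ ω₁ and c : [ω₂]² → μ. Then the following are equivalent: (1) for every set A ⊆ ω₂ of size ω₁, every countably infinite B ⊆ ω₂ with sup A ≤ min B (A below B), and every ν < μ, there exist α ∈ A and β ∈ B with c({α,β}) = ν; (2) for every countably infinite B ⊆ ω₂ and every ν < μ, the set {α < min B : ν ∉ c''[{α},B]} is countable; (3) for every countable family 𝓑 of countably infinite subsets of ω₂ and every ν < μ, the set {α < min(⋃𝓑) : ∃ B ∈ 𝓑 with ν ∉ c''[{α},B]} is countable. -/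
noncomputable section
open Set

/-- The second uncountable ordinal `ω₂`. -/
def w2 : Ordinal.{0} := (Cardinal.aleph 2).ord

/-- `c` establishes `ω₂ ↛ [(ω₁;ω)]²_μ`: for every `A ⊆ ω₂` of size `ω₁`, every countably
infinite `B ⊆ ω₂` lying entirely above `A`, and every colour `ν < μ`, some pair `{α,β}`
with `α ∈ A`, `β ∈ B` gets colour `ν`. -/
def Establishes (μ : Ordinal.{0}) (c : Ordinal.{0} → Ordinal.{0} → Ordinal.{0}) : Prop :=
  ∀ A : Set Ordinal.{0}, A ⊆ Iio w2 → Cardinal.mk A = Cardinal.aleph 1 →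
    ∀ B : Set Ordinal.{0}, B ⊆ Iio w2 → B.Countable → B.Infinite →
      (∀ a ∈ A, ∀ b ∈ B, a < b) →
      ∀ ν < μ, ∃ a ∈ A, ∃ b ∈ B, c a b = ν

/-- Lemma `equiv`. For `μ ≤ ω₁` and `c : [ω₂]² → μ`, the following
are equivalent: (1) `c` establishes `ω₂ ↛ [(ω₁;ω)]²_μ`; (2) for every countably infinite
`B ⊆ ω₂` and `ν < μ`, the set `{α < min B : ν ∉ c''[{α},B]}` is countable; (3) for every
countable family `𝓑` of countably infinite subsets of `ω₂` and every `ν < μ`, the set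
`{α < min ⋃𝓑 : ∃ B ∈ 𝓑, ν ∉ c''[{α},B]}` is countable. -/
theorem establishes_iff_countable_misses
    (μ : Ordinal.{0}) (hμ : μ ≤ w1)
    (c : Ordinal.{0} → Ordinal.{0} → Ordinal.{0})
    (hc : ∀ α β, α < β → β < w2 → c α β < μ) :
    (Establishes μ c ↔
      (∀ B : Set Ordinal.{0}, B ⊆ Iio w2 → B.Countable → B.Infinite →
        ∀ ν < μ, {α : Ordinal.{0} | α < sInf B ∧ ∀ β ∈ B, c α β ≠ ν}.Countable)) ∧
    ((∀ B : Set Ordinal.{0}, B ⊆ Iio w2 → B.Countable → B.Infinite →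
        ∀ ν < μ, {α : Ordinal.{0} | α < sInf B ∧ ∀ β ∈ B, c α β ≠ ν}.Countable) ↔
      (∀ 𝓑 : Set (Set Ordinal.{0}), 𝓑.Countable →
        (∀ B ∈ 𝓑, B ⊆ Iio w2 ∧ B.Countable ∧ B.Infinite) →
        ∀ ν < μ,
          {α : Ordinal.{0} | α < sInf (⋃₀ 𝓑) ∧ ∃ B ∈ 𝓑, ∀ β ∈ B, c α β ≠ ν}.Countable)) := by
  constructor
  · constructor
    · -- (1) → (2)
      intro h B hB2 hBc hBi ν hν
      by_contra hS
      have h1 : Cardinal.aleph 1 ≤ Cardinal.mk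
          {α : Ordinal.{0} | α < sInf B ∧ ∀ β ∈ B, c α β ≠ ν} := by
        rw [← not_lt, ← Cardinal.countable_iff_lt_aleph_one]
        exact hS
      obtain ⟨A, hAS, hA⟩ := Cardinal.le_mk_iff_exists_subset.mp h1
      have hminB : sInf B ∈ B := csInf_mem hBi.nonempty
      have hA2 : A ⊆ Iio w2 := fun a ha =>
        lt_trans (hAS ha).1 (hB2 hminB)
      obtain ⟨a, ha, b, hb, hab⟩ := h A hA2 hA B hB2 hBc hBi
        (fun a ha b hb => lt_of_lt_of_le (hAS ha).1 (csInf_le (OrderBot.bddBelow _) hb))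
        ν hν
      exact (hAS ha).2 b hb hab
    · -- (2) → (1)
      intro h A hA2 hA B hB2 hBc hBi hAB ν hν
      by_contra hcon
      push_neg at hcon
      have hAS : A ⊆ {α : Ordinal.{0} | α < sInf B ∧ ∀ β ∈ B, c α β ≠ ν} := by
        intro a ha
        refine ⟨?_, fun b hb => hcon a ha b hb⟩
        exact hAB a ha (sInf B) (csInf_mem hBi.nonempty)
      have : A.Countable := (h B hB2 hBc hBi ν hν).mono hAS
      rw [Cardinal.countable_iff_lt_aleph_one, hA] at this
      exact lt_irrefl _ this
  · constructor
    · -- (2) → (3)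
      intro h 𝓑 h𝓑c h𝓑 ν hν
      have : {α : Ordinal.{0} | α < sInf (⋃₀ 𝓑) ∧ ∃ B ∈ 𝓑, ∀ β ∈ B, c α β ≠ ν} ⊆
          ⋃ B ∈ 𝓑, {α : Ordinal.{0} | α < sInf B ∧ ∀ β ∈ B, c α β ≠ ν} := by
        rintro α ⟨hα, B, hB, hαB⟩
        refine mem_iUnion₂.mpr ⟨B, hB, ?_, hαB⟩
        exact lt_of_lt_of_le hα (csInf_le_csInf (OrderBot.bddBelow _)
          ((h𝓑 B hB).2.2.nonempty) (subset_sUnion_of_mem hB))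
      refine Countable.mono this ?_
      exact Countable.biUnion h𝓑c (fun B hB =>
        h B (h𝓑 B hB).1 (h𝓑 B hB).2.1 (h𝓑 B hB).2.2 ν hν)
    · -- (3) → (2)
      intro h B hB2 hBc hBi ν hν
      have := h {B} (countable_singleton B)
        (fun B' hB' => by rw [mem_singleton_iff] at hB'; subst hB'; exact ⟨hB2, hBc, hBi⟩)
        ν hν
      rw [sUnion_singleton] at this
      refine Countable.mono ?_ this
      rintro α ⟨hα1, hα2⟩
      exact ⟨hα1, B, mem_singleton B, hα2⟩
end
end

section
/- Let k ≥ 1 and let f : [ω₁]² → ω₁ be an AR^(k)-function. Then f establishes ω₁ ↛* [(ω;ω₁)]_{k-bdd}: for every countably infinite A ⊆ ω₁ and every uncountable B ⊆ ω₁, there exist a k-element subset d ⊆ A and β ∈ B with max d < β such that f is constant on the pairs {δ, β} for δ ∈ d, i.e. |f''[d,{β}]| = 1. -/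
noncomputable section
open Set

/-- `f` (as a colouring of pairs `{α,β}`, `α < β`, of ordinals below `ω₁`) is `k`-bounded:
every colour class has at most `k` pairs. -/
def kBdd (k : ℕ) (f : Ordinal.{0} → Ordinal.{0} → Ordinal.{0}) : Prop :=
  ∀ γ : Ordinal.{0},
    Cardinal.mk {p : Ordinal.{0} × Ordinal.{0} // p.1 < p.2 ∧ p.2 < w1 ∧ f p.1 p.2 = γ} ≤ k

/-- `Homo(D, f)`: the set of `α` such that for each `d ∈ D`, the colouring `f(·, α)` is
constant on the elements of `d` below `α`. -/
def HomoSet (D : Finset (Finset Ordinal.{0})) (f : Ordinal.{0} → Ordinal.{0} → Ordinal.{0}) :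
    Set Ordinal.{0} :=
  {α | ∀ d ∈ D, ∀ δ ∈ d, ∀ δ' ∈ d, δ < α → δ' < α → f δ α = f δ' α}

/-- `D` is a member of `SEQ_k(ω, ω₁)`: an `ω`-sequence of finite families of pairwise
disjoint `k`-element subsets of `ω₁`, whose unions are pairwise disjoint. -/
def IsSeqK (k : ℕ) (D : ℕ → Finset (Finset Ordinal.{0})) : Prop :=
  (∀ i, ∀ d ∈ D i, d.card = k ∧ ∀ δ ∈ d, δ < w1) ∧
  (∀ i, ∀ d ∈ D i, ∀ d' ∈ D i, d ≠ d' → ∀ δ ∈ d, δ ∉ d') ∧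
  (∀ i j : ℕ, i ≠ j → ∀ d ∈ D i, ∀ d' ∈ D j, ∀ δ ∈ d, δ ∉ d')

/-- `f` is an `AR^(k)`-function: it is `k`-bounded, and for every sequence in `SEQ_k(ω,ω₁)`
some tail of `ω₁` is covered by the corresponding `Homo` sets. -/
def IsAR (k : ℕ) (f : Ordinal.{0} → Ordinal.{0} → Ordinal.{0}) : Prop :=
  kBdd k f ∧
  ∀ D : ℕ → Finset (Finset Ordinal.{0}), IsSeqK k D →
    ∃ γ < w1, ∀ α, γ ≤ α → α < w1 → ∃ i, α ∈ HomoSet (D i) f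

/-- Any proper initial segment of `ω₁` is countable. -/
lemma countable_Iio_of_lt_w1_s4 {δ : Ordinal.{0}} (hδ : δ < w1) : (Iio δ).Countable := by
  rw [Cardinal.countable_iff_lt_aleph_one, Ordinal.mk_Iio_ordinal]
  have h1 : δ.card < Cardinal.aleph 1 := Cardinal.lt_ord.mp hδ
  have h2 : Cardinal.lift.{1} δ.card < Cardinal.lift.{1} (Cardinal.aleph 1) :=
    Cardinal.lift_lt.mpr h1
  rwa [Cardinal.lift_aleph, Ordinal.lift_one] at h2

/-- An `AR^(k)`-function establishes `ω₁ ↛* [(ω;ω₁)]_{k-bdd}`: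
for every countably infinite `A ⊆ ω₁` and uncountable `B ⊆ ω₁` there are a `k`-element
`d ⊆ A` and `β ∈ B` above `d` such that `f` is constant on the pairs `{δ,β}`, `δ ∈ d`. -/
theorem isAR_establishes (k : ℕ) (hk : 1 ≤ k)
    (f : Ordinal.{0} → Ordinal.{0} → Ordinal.{0}) (hf : IsAR k f) :
    ∀ A : Set Ordinal.{0}, A ⊆ Iio w1 → A.Countable → A.Infinite →
      ∀ B : Set Ordinal.{0}, B ⊆ Iio w1 → ¬ B.Countable →
        ∃ d : Finset Ordinal.{0}, ↑d ⊆ A ∧ d.card = k ∧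
          ∃ β ∈ B, (∀ δ ∈ d, δ < β) ∧ ∃ γ, ∀ δ ∈ d, f δ β = γ := by
  classical
  intro A hA hAc hAi B hB hBu
  obtain ⟨_, hAR⟩ := hf
  -- an injective enumeration of part of A
  let e : ℕ → Ordinal.{0} := fun n => ((Set.Infinite.natEmbedding A hAi) n : Ordinal.{0})
  have he_inj : Function.Injective e := fun m n h => by
    have := (Set.Infinite.natEmbedding A hAi).injective (Subtype.ext h)
    exact this
  have heA : ∀ n, e n ∈ A := fun n => ((Set.Infinite.natEmbedding A hAi) n).2
  -- disjoint k-element subsets of A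
  let dd : ℕ → Finset Ordinal.{0} := fun i => (Finset.range k).image (fun j => e (i * k + j))
  have hmem : ∀ i δ, δ ∈ dd i ↔ ∃ j < k, e (i * k + j) = δ := by
    intro i δ
    simp [dd, Finset.mem_image]
  have hddA : ∀ i, (dd i : Set Ordinal.{0}) ⊆ A := by
    intro i δ hδ
    obtain ⟨j, _, rfl⟩ := (hmem i δ).mp hδ
    exact heA _
  have hcard : ∀ i, (dd i).card = k := by
    intro i
    rw [Finset.card_image_of_injOn, Finset.card_range]
    intro a _ b _ h
    have := he_inj h
    omega
  have hdisj : ∀ i j : ℕ, i ≠ j → ∀ δ ∈ dd i, δ ∉ dd j := by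
    intro i j hij δ hδi hδj
    obtain ⟨a, ha, rfl⟩ := (hmem i δ).mp hδi
    obtain ⟨b, hb, hbe⟩ := (hmem j _).mp hδj
    have : j * k + b = i * k + a := he_inj hbe
    rcases lt_or_gt_of_ne hij with h | h
    · nlinarith
    · nlinarith
  -- the sequence of singleton families
  have hseq : IsSeqK k (fun i => {dd i}) := by
    refine ⟨?_, ?_, ?_⟩
    · intro i d hd
      rw [Finset.mem_singleton] at hd
      subst hd
      exact ⟨hcard i, fun δ hδ => hA (hddA i hδ)⟩
    · intro i d hd d' hd' hne
      rw [Finset.mem_singleton] at hd hd'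
      exact absurd (hd.trans hd'.symm) hne
    · intro i j hij d hd d' hd'
      rw [Finset.mem_singleton] at hd hd'
      subst hd; subst hd'
      exact hdisj i j hij
  obtain ⟨γ0, hγ0, hcov⟩ := hAR _ hseq
  -- find β ∈ B with β ≥ γ0 and β above all of A
  have hbad : (Iio γ0 ∪ ⋃ a ∈ A, Iic a).Countable := by
    refine (countable_Iio_of_lt_w1_s4 hγ0).union ?_
    refine Countable.biUnion hAc (fun a ha => ?_)
    have : Iic a ⊆ Iio (a + 1) := fun x hx => lt_of_le_of_lt hx (Order.lt_succ a)
    refine (countable_Iio_of_lt_w1_s4 ?_).mono this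
    have hlim : Order.IsSuccLimit (w1 : Ordinal.{0}) := Cardinal.isSuccLimit_ord (Cardinal.aleph0_le_aleph 1)
    exact hlim.succ_lt (hA ha)
  have hnsub : ¬ B ⊆ (Iio γ0 ∪ ⋃ a ∈ A, Iic a) := fun h => hBu (hbad.mono h)
  obtain ⟨β, hβB, hβgood⟩ := not_subset.mp hnsub
  rw [mem_union, not_or] at hβgood
  obtain ⟨hβ1, hβ2⟩ := hβgood
  have hβγ0 : γ0 ≤ β := le_of_not_gt hβ1
  have hβA : ∀ a ∈ A, a < β := by
    intro a ha
    by_contra h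
    exact hβ2 (mem_biUnion ha (le_of_not_gt h))
  obtain ⟨i, hi⟩ := hcov β hβγ0 (hB hβB)
  -- the k-set dd i works
  refine ⟨dd i, hddA i, hcard i, β, hβB, fun δ hδ => hβA δ (hddA i hδ), ?_⟩
  have hne : (dd i).Nonempty := Finset.card_pos.mp (by rw [hcard i]; exact hk)
  obtain ⟨δ0, hδ0⟩ := hne
  refine ⟨f δ0 β, fun δ hδ => ?_⟩
  exact hi (dd i) (Finset.mem_singleton_self _) δ hδ δ0 hδ0
    (hβA δ (hddA i hδ)) (hβA δ0 (hddA i hδ0))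

end
end

section
/- Assuming CH, for each k ≥ 1 there exists an AR^(k)-function f : [ω₁]² → ω₁. -/
noncomputable section
open Set

namespace ARProof

open Cardinal Ordinal
open scoped Classical

lemma omega0_le_w1 : Ordinal.omega0 ≤ w1 := by
  rw [w1, Cardinal.omega0_le_ord]; exact Cardinal.aleph0_le_aleph 1

lemma w1_pos : (0 : Ordinal.{0}) < w1 := Ordinal.omega0_pos.trans_le omega0_le_w1

lemma nat_lt_w1 (n : ℕ) : (n : Ordinal.{0}) < w1 :=
  (Ordinal.nat_lt_omega0 n).trans_le omega0_le_w1

lemma w1_isLimit : Order.IsSuccLimit w1 := Cardinal.isSuccLimit_ord (Cardinal.aleph0_le_aleph 1)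

lemma w1_le_sq : w1 ≤ w1 * w1 := by
  conv_lhs => rw [← mul_one w1]
  exact mul_le_mul_right (Order.one_le_iff_pos.2 w1_pos) w1

lemma card_le_of_lt_w1 {o : Ordinal.{0}} (h : o < w1) : o.card ≤ ℵ₀ := by
  have := Cardinal.lt_ord.1 h
  rwa [← Cardinal.succ_aleph0, Order.lt_succ_iff] at this

lemma countable_Iio {α : Ordinal.{0}} (h : α < w1) : (Set.Iio α).Countable := by
  rw [← Set.countable_coe_iff, ← Cardinal.mk_le_aleph0_iff, Ordinal.mk_Iio_ordinal]
  calc Cardinal.lift.{1} α.card ≤ Cardinal.lift.{1} ℵ₀ :=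
        Cardinal.lift_le.2 (card_le_of_lt_w1 h)
    _ = ℵ₀ := Cardinal.lift_aleph0

lemma mul_lt_mul_bound {a x y r : Ordinal.{0}} (hr : r < a) (hxy : x < y) :
    a * x + r < a * y := by
  have h1 : a * x + r < a * Order.succ x := by
    rw [Ordinal.mul_succ]; exact (add_lt_add_iff_left _).2 hr
  exact h1.trans_le (mul_le_mul_right (Order.succ_le_of_lt hxy) a)

lemma mul_add_cancel {a x y r s : Ordinal.{0}} (hr : r < a) (hs : s < a)
    (h : a * x + r = a * y + s) : x = y ∧ r = s := by
  rcases lt_trichotomy x y with hl | rfl | hg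
  · exact absurd h (ne_of_lt ((mul_lt_mul_bound hr hl).trans_le le_self_add))
  · exact ⟨rfl, add_left_cancel_iff.1 h⟩
  · exact absurd h.symm (ne_of_lt ((mul_lt_mul_bound hs hg).trans_le le_self_add))

/-- Under CH there is an enumeration of `SEQ_k(ω,ω₁)` by the ordinals below `ω₁`. -/
lemma exists_enum (hCH : Cardinal.continuum.{0} = Cardinal.aleph 1) (k : ℕ) :
    ∃ e : Ordinal.{0} → (ℕ → Finset (Finset Ordinal.{0})),
      (∀ ξ, IsSeqK k (e ξ)) ∧ ∀ D, IsSeqK k D → ∃ ξ, ξ < w1 ∧ e ξ = D := by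
  classical
  set Y := ↥(Set.Iio w1) with hY
  have hmkY : #Y = Cardinal.lift.{1,0} (Cardinal.aleph 1) := by
    rw [hY, Ordinal.mk_Iio_ordinal, w1, Cardinal.card_ord]
  haveI hYinf : Infinite Y := by
    rw [Cardinal.infinite_iff, hmkY, ← Cardinal.lift_aleph0.{1,0}]
    exact Cardinal.lift_le.2 (Cardinal.aleph0_le_aleph 1)
  have hmk1 : #(ℕ → Finset (Finset Y)) ≤ Cardinal.lift.{1,0} (Cardinal.aleph 1) := by
    rw [Cardinal.mk_arrow, Cardinal.mk_finset_of_infinite, Cardinal.mk_finset_of_infinite,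
      Cardinal.mk_nat, hmkY, Cardinal.lift_uzero, ← Cardinal.lift_power, ← hCH,
      Cardinal.continuum_power_aleph0]
  -- an injection of the family of `SEQ_k` sequences into `ℕ → Finset (Finset Y)`
  set p : Ordinal.{0} → Prop := fun x => x ∈ Set.Iio w1 with hp
  have hrec : ∀ E : Finset (Finset Ordinal.{0}), (∀ d ∈ E, ∀ δ ∈ d, δ < w1) →
      (E.image (fun d => d.subtype p)).image
        (fun t => t.map (Function.Embedding.subtype p)) = E := by
    intro E hE
    rw [Finset.image_image]
    refine (Finset.image_congr ?_).trans Finset.image_id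
    intro d hd
    simp only [Function.comp_apply, Finset.subtype_map, id_eq]
    exact Finset.filter_eq_self.2 (fun x hx => hE d hd x hx)
  have hXle : #({D : ℕ → Finset (Finset Ordinal.{0}) // IsSeqK k D}) ≤ #Y := by
    refine le_trans (Cardinal.mk_le_of_injective
      (f := fun D : {D : ℕ → Finset (Finset Ordinal.{0}) // IsSeqK k D} =>
        (fun i => (D.1 i).image (fun d => d.subtype p) : ℕ → Finset (Finset Y))) ?_)
      (hmk1.trans_eq hmkY.symm)
    intro D D' h
    apply Subtype.ext; funext i
    have h1 := congrFun h i
    have e1 := hrec (D.1 i) (fun d hd => (D.2.1 i d hd).2)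
    have e2 := hrec (D'.1 i) (fun d hd => (D'.2.1 i d hd).2)
    rw [← e1, ← e2]
    exact congrArg _ h1
  obtain ⟨ι⟩ := (Cardinal.le_def _ _).1 hXle
  have hdflt : IsSeqK k (fun _ => (∅ : Finset (Finset Ordinal.{0}))) := by
    refine ⟨?_, ?_, ?_⟩ <;> simp
  refine ⟨fun ξ => if h : ∃ S : {D : ℕ → Finset (Finset Ordinal.{0}) // IsSeqK k D},
      ((ι S : Y) : Ordinal.{0}) = ξ then h.choose.1 else (fun _ => ∅), fun ξ => ?_, fun D hD => ?_⟩
  · dsimp only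
    by_cases h : ∃ S : {D : ℕ → Finset (Finset Ordinal.{0}) // IsSeqK k D},
        ((ι S : Y) : Ordinal.{0}) = ξ
    · rw [dif_pos h]; exact h.choose.2
    · rw [dif_neg h]; exact hdflt
  · refine ⟨((ι ⟨D, hD⟩ : Y) : Ordinal.{0}), (ι ⟨D, hD⟩).2, ?_⟩
    dsimp only
    have h : ∃ S : {D : ℕ → Finset (Finset Ordinal.{0}) // IsSeqK k D},
        ((ι S : Y) : Ordinal.{0}) = ((ι ⟨D, hD⟩ : Y) : Ordinal.{0}) := ⟨⟨D, hD⟩, rfl⟩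
    rw [dif_pos h]
    have h2 : ι h.choose = ι ⟨D, hD⟩ := Subtype.ext h.choose_spec
    have h3 := ι.injective h2
    rw [h3]

section Construction

variable (e : Ordinal.{0} → ℕ → Finset (Finset Ordinal.{0}))

/-- The union of a finite family of finite sets. -/
def famU (D : Finset (Finset Ordinal.{0})) : Finset Ordinal.{0} := D.biUnion id

lemma mem_famU {D : Finset (Finset Ordinal.{0})} {x : Ordinal.{0}} :
    x ∈ famU D ↔ ∃ d ∈ D, x ∈ d := by
  simp [famU]

/-- An enumeration of the ordinals below `α` (for `0 < α < ω₁`). -/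
def enumLt (α : Ordinal.{0}) : ℕ → Ordinal.{0} :=
  if h : (Set.Iio α).Countable ∧ (Set.Iio α).Nonempty then
    (Set.Countable.exists_eq_range h.1 h.2).choose
  else fun _ => 0

lemma enumLt_surj {α : Ordinal.{0}} (h1 : α < w1) (h2 : 0 < α) {ξ : Ordinal.{0}} (hξ : ξ < α) :
    ∃ n, enumLt α n = ξ := by
  have h : (Set.Iio α).Countable ∧ (Set.Iio α).Nonempty := ⟨countable_Iio h1, ⟨0, h2⟩⟩
  unfold enumLt
  rw [dif_pos h]
  have hr := (Set.Countable.exists_eq_range h.1 h.2).choose_spec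
  have : ξ ∈ Set.Iio α := hξ
  rw [hr] at this
  exact this

/-- Choice of an index `j` whose family union avoids `W`. -/
def pick (Dn : ℕ → Finset (Finset Ordinal.{0})) (W : Finset Ordinal.{0}) : ℕ :=
  if h : ∃ j, Disjoint (famU (Dn j)) W then h.choose else 0

lemma exists_disjoint {k : ℕ} {Dn : ℕ → Finset (Finset Ordinal.{0})} (hD : IsSeqK k Dn)
    (W : Finset Ordinal.{0}) : ∃ j, Disjoint (famU (Dn j)) W := by
  by_contra hcon
  push_neg at hcon
  have hw : ∀ j : ℕ, ∃ x, x ∈ famU (Dn j) ∧ x ∈ W := by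
    intro j
    obtain ⟨x, hx1, hx2⟩ := Finset.not_disjoint_iff.1 (hcon j)
    exact ⟨x, hx1, hx2⟩
  choose x hx1 hx2 using hw
  have hinj : Function.Injective x := by
    intro i j hij
    by_contra hne
    obtain ⟨d, hd, hxd⟩ := mem_famU.1 (hx1 i)
    obtain ⟨d', hd', hxd'⟩ := mem_famU.1 (hx1 j)
    rw [hij] at hxd
    exact hD.2.2 j i (Ne.symm hne) d' hd' d hd _ hxd' hxd
  have hWinf : Infinite ↥(W : Set Ordinal.{0}) :=
    Infinite.of_injective (fun n => (⟨x n, hx2 n⟩ : ↥(W : Set Ordinal.{0})))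
      (fun i j h => hinj (congrArg Subtype.val h))
  exact (W.finite_toSet).not_infinite (Set.infinite_coe_iff.1 hWinf)

lemma pick_spec {k : ℕ} {Dn : ℕ → Finset (Finset Ordinal.{0})} (hD : IsSeqK k Dn)
    (W : Finset Ordinal.{0}) : Disjoint (famU (Dn (pick Dn W))) W := by
  have h : ∃ j, Disjoint (famU (Dn j)) W := exists_disjoint hD W
  unfold pick
  rw [dif_pos h]
  exact h.choose_spec

/-- The accumulated union of the chosen families at stage `α`, after `n` steps. -/
def acc (α : Ordinal.{0}) (n : ℕ) : Finset Ordinal.{0} :=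
  Nat.rec ∅ (fun m ih => ih ∪ famU ((e (enumLt α m)) (pick (e (enumLt α m)) ih))) n

/-- The chosen index for the `n`-th task at stage `α`. -/
def gIdx (α : Ordinal.{0}) (n : ℕ) : ℕ := pick (e (enumLt α n)) (acc e α n)

/-- The union of the chosen family for the `n`-th task at stage `α`. -/
def V (α : Ordinal.{0}) (n : ℕ) : Finset Ordinal.{0} :=
  famU ((e (enumLt α n)) (gIdx e α n))

lemma acc_succ (α : Ordinal.{0}) (n : ℕ) : acc e α (n + 1) = acc e α n ∪ V e α n := rfl

lemma acc_mono {α : Ordinal.{0}} {m n : ℕ} (h : m ≤ n) : acc e α m ⊆ acc e α n := by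
  induction n with
  | zero => rw [Nat.le_zero.1 h]
  | succ n ih =>
    rcases Nat.eq_or_lt_of_le h with h' | h'
    · rw [h']
    · refine (ih (Nat.lt_succ_iff.1 h')).trans ?_
      rw [acc_succ]; exact Finset.subset_union_left

lemma V_disjoint_acc {k : ℕ} (He : ∀ ξ, IsSeqK k (e ξ)) (α : Ordinal.{0}) (n : ℕ) :
    Disjoint (V e α n) (acc e α n) :=
  pick_spec (He (enumLt α n)) (acc e α n)

lemma V_pairwise {k : ℕ} (He : ∀ ξ, IsSeqK k (e ξ)) {α : Ordinal.{0}} {m n : ℕ} (h : m ≠ n) :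
    Disjoint (V e α m) (V e α n) := by
  have key : ∀ {a b : ℕ}, a < b → Disjoint (V e α b) (V e α a) := by
    intro a b hab
    refine (V_disjoint_acc e He α b).mono_right ?_
    refine subset_trans ?_ (acc_mono e hab)
    rw [acc_succ]; exact Finset.subset_union_right
  rcases lt_or_gt_of_ne h with h' | h'
  · exact (key h').symm
  · exact key h'

/-- The task index responsible for `δ` at stage `α`. -/
def colN (α δ : Ordinal.{0}) : ℕ :=
  if h : ∃ n, δ ∈ V e α n then h.choose else 0

/-- The block (member of the chosen family) containing `δ` at stage `α`. -/
def colD (α δ : Ordinal.{0}) : Finset Ordinal.{0} :=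
  if h : ∃ d ∈ (e (enumLt α (colN e α δ))) (gIdx e α (colN e α δ)), δ ∈ d then
    h.choose else ∅

lemma colN_mem {α δ : Ordinal.{0}} (hV : ∃ n, δ ∈ V e α n) : δ ∈ V e α (colN e α δ) := by
  unfold colN
  rw [dif_pos hV]
  exact hV.choose_spec

lemma col_struct {k : ℕ} (He : ∀ ξ, IsSeqK k (e ξ)) {α δ : Ordinal.{0}}
    (hV : ∃ n, δ ∈ V e α n) :
    colD e α δ ∈ (e (enumLt α (colN e α δ))) (gIdx e α (colN e α δ)) ∧ δ ∈ colD e α δ ∧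
      sInf ↑(colD e α δ) ∈ colD e α δ ∧ sInf ↑(colD e α δ) < w1 ∧ (colD e α δ).card = k := by
  have h1 := colN_mem e hV
  have h2 : ∃ d ∈ (e (enumLt α (colN e α δ))) (gIdx e α (colN e α δ)), δ ∈ d := mem_famU.1 h1
  have h3 : colD e α δ ∈ (e (enumLt α (colN e α δ))) (gIdx e α (colN e α δ)) ∧
      δ ∈ colD e α δ := by
    unfold colD
    rw [dif_pos h2]
    exact h2.choose_spec
  have hne : (↑(colD e α δ) : Set Ordinal.{0}).Nonempty := ⟨δ, Finset.mem_coe.2 h3.2⟩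
  have hmem : sInf (↑(colD e α δ) : Set Ordinal.{0}) ∈ colD e α δ :=
    Finset.mem_coe.1 (csInf_mem hne)
  obtain ⟨hcard, hlt⟩ := (He (enumLt α (colN e α δ))).1 _ _ h3.1
  exact ⟨h3.1, h3.2, hmem, hlt _ hmem, hcard⟩

lemma colN_unique {k : ℕ} (He : ∀ ξ, IsSeqK k (e ξ)) {α δ : Ordinal.{0}} {n : ℕ}
    (hn : δ ∈ V e α n) : colN e α δ = n := by
  have h1 := colN_mem e ⟨n, hn⟩
  by_contra hne
  exact (Finset.disjoint_left.1 (V_pairwise e He hne) h1) hn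

lemma colD_unique {k : ℕ} (He : ∀ ξ, IsSeqK k (e ξ)) {α δ : Ordinal.{0}} {n : ℕ}
    {d : Finset Ordinal.{0}} (hn : δ ∈ V e α n)
    (hd : d ∈ (e (enumLt α n)) (gIdx e α n)) (hδ : δ ∈ d) : colD e α δ = d := by
  have hcn := colN_unique e He hn
  have hstr := col_struct e He ⟨n, hn⟩
  rw [hcn] at hstr
  by_contra hne
  exact (He (enumLt α n)).2.1 (gIdx e α n) _ hstr.1 _ hd hne δ hstr.2.1 hδ

/-- The colouring. -/
def fAR : Ordinal.{0} → Ordinal.{0} → Ordinal.{0} := fun δ α =>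
  if δ < α ∧ α < w1 then
    if ∃ n, δ ∈ V e α n then
      w1 * w1 * α + (w1 * (colN e α δ : Ordinal.{0}) + sInf (↑(colD e α δ) : Set Ordinal.{0}))
    else w1 * w1 * w1 + (w1 * w1 * α + δ)
  else 0

lemma fAR_eq1 {α δ : Ordinal.{0}} (h1 : δ < α) (h2 : α < w1) (hV : ∃ n, δ ∈ V e α n) :
    fAR e δ α = w1 * w1 * α +
      (w1 * (colN e α δ : Ordinal.{0}) + sInf (↑(colD e α δ) : Set Ordinal.{0})) := by
  unfold fAR
  rw [if_pos ⟨h1, h2⟩, if_pos hV]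

lemma fAR_eq2 {α δ : Ordinal.{0}} (h1 : δ < α) (h2 : α < w1) (hV : ¬∃ n, δ ∈ V e α n) :
    fAR e δ α = w1 * w1 * w1 + (w1 * w1 * α + δ) := by
  unfold fAR
  rw [if_pos ⟨h1, h2⟩, if_neg hV]

lemma block_lt {k : ℕ} (He : ∀ ξ, IsSeqK k (e ξ)) {α δ : Ordinal.{0}}
    (hV : ∃ n, δ ∈ V e α n) :
    w1 * (colN e α δ : Ordinal.{0}) + sInf (↑(colD e α δ) : Set Ordinal.{0}) < w1 * w1 :=
  mul_lt_mul_bound (col_struct e He hV).2.2.2.1 (nat_lt_w1 _)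

lemma fAR1_lt {k : ℕ} (He : ∀ ξ, IsSeqK k (e ξ)) {α δ : Ordinal.{0}} (h2 : α < w1)
    (hV : ∃ n, δ ∈ V e α n) :
    w1 * w1 * α + (w1 * (colN e α δ : Ordinal.{0}) + sInf (↑(colD e α δ) : Set Ordinal.{0}))
      < w1 * w1 * w1 :=
  mul_lt_mul_bound (block_lt e He hV) h2

lemma kBdd_fAR {k : ℕ} (He : ∀ ξ, IsSeqK k (e ξ)) (hk : 1 ≤ k) : kBdd k (fAR e) := by
  intro γ
  by_cases hne : Nonempty {p : Ordinal.{0} × Ordinal.{0} //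
      p.1 < p.2 ∧ p.2 < w1 ∧ fAR e p.1 p.2 = γ}
  swap
  · rw [not_nonempty_iff] at hne
    rw [Cardinal.mk_eq_zero]
    exact Cardinal.zero_le _
  obtain ⟨⟨⟨δ₀, α₀⟩, hlt₀, hw₀, hγ₀⟩⟩ := hne
  by_cases hV₀ : ∃ n, δ₀ ∈ V e α₀ n
  · -- branch 1: the colour class is contained in a single `k`-element block
    rw [fAR_eq1 e hlt₀ hw₀ hV₀] at hγ₀
    obtain ⟨hd₀mem, hδ₀mem, hm₀mem, hm₀lt, hcard₀⟩ := col_struct e He hV₀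
    have hmain : ∀ p : Ordinal.{0} × Ordinal.{0}, p.1 < p.2 → p.2 < w1 → fAR e p.1 p.2 = γ →
        p.2 = α₀ ∧ p.1 ∈ colD e α₀ δ₀ := by
      rintro ⟨δ, α⟩ hlt hw hγ
      by_cases hV : ∃ n, δ ∈ V e α n
      · rw [fAR_eq1 e hlt hw hV] at hγ
        obtain ⟨hdmem, hδmem, hmmem, hmlt, hcard⟩ := col_struct e He hV
        rw [← hγ₀] at hγ
        obtain ⟨hα, hr⟩ := mul_add_cancel (block_lt e He hV) (block_lt e He hV₀) hγ
        obtain ⟨hn, hm⟩ := mul_add_cancel hmlt hm₀lt hr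
        subst hα
        have hnn : colN e α δ = colN e α δ₀ := Nat.cast_inj.1 hn
        have hfam : colD e α δ ∈ (e (enumLt α (colN e α δ₀))) (gIdx e α (colN e α δ₀)) := by
          rw [← hnn]; exact hdmem
        have hdd : colD e α δ = colD e α δ₀ := by
          by_contra hne'
          exact (He (enumLt α (colN e α δ₀))).2.1 (gIdx e α (colN e α δ₀)) _ hfam _ hd₀mem hne'
            (sInf (↑(colD e α δ) : Set Ordinal.{0})) hmmem (hm ▸ hm₀mem)
        exact ⟨rfl, hdd ▸ hδmem⟩
      · exfalso
        rw [fAR_eq2 e hlt hw hV] at hγ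
        have h1 : γ < w1 * w1 * w1 := hγ₀ ▸ fAR1_lt e He hw₀ hV₀
        have h2 : w1 * w1 * w1 ≤ γ := hγ ▸ le_self_add
        exact absurd h2 (not_le.2 h1)
    refine le_trans (Cardinal.mk_le_of_injective
      (f := fun q : {p : Ordinal.{0} × Ordinal.{0} //
          p.1 < p.2 ∧ p.2 < w1 ∧ fAR e p.1 p.2 = γ} =>
        (⟨q.1.1, (hmain q.1 q.2.1 q.2.2.1 q.2.2.2).2⟩ :
          {x : Ordinal.{0} // x ∈ colD e α₀ δ₀})) ?_) ?_
    · intro a b hab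
      apply Subtype.ext
      apply Prod.ext
      · exact congrArg Subtype.val hab
      · exact (hmain a.1 a.2.1 a.2.2.1 a.2.2.2).1.trans
          ((hmain b.1 b.2.1 b.2.2.1 b.2.2.2).1).symm
    · have hfin : #{x : Ordinal.{0} // x ∈ colD e α₀ δ₀} = ((colD e α₀ δ₀).card : Cardinal) :=
        Cardinal.mk_coe_finset
      rw [hfin, hcard₀]
  · -- branch 2: the colour class is a singleton
    rw [fAR_eq2 e hlt₀ hw₀ hV₀] at hγ₀
    have hsub : ∀ p : Ordinal.{0} × Ordinal.{0}, p.1 < p.2 → p.2 < w1 → fAR e p.1 p.2 = γ →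
        p = (δ₀, α₀) := by
      rintro ⟨δ, α⟩ hlt hw hγ
      by_cases hV : ∃ n, δ ∈ V e α n
      · exfalso
        rw [fAR_eq1 e hlt hw hV] at hγ
        have h1 : γ < w1 * w1 * w1 := hγ ▸ fAR1_lt e He hw hV
        have h2 : w1 * w1 * w1 ≤ γ := hγ₀ ▸ le_self_add
        exact absurd h2 (not_le.2 h1)
      · rw [fAR_eq2 e hlt hw hV, ← hγ₀] at hγ
        have h1 := add_left_cancel_iff.1 hγ
        obtain ⟨hα, hδ⟩ := mul_add_cancel (hlt.trans (hw.trans_le w1_le_sq))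
          (hlt₀.trans (hw₀.trans_le w1_le_sq)) h1
        exact Prod.ext hδ hα
    have hss : Subsingleton {p : Ordinal.{0} × Ordinal.{0} //
        p.1 < p.2 ∧ p.2 < w1 ∧ fAR e p.1 p.2 = γ} := by
      constructor
      intro a b
      apply Subtype.ext
      exact (hsub a.1 a.2.1 a.2.2.1 a.2.2.2).trans (hsub b.1 b.2.1 b.2.2.1 b.2.2.2).symm
    calc #{p : Ordinal.{0} × Ordinal.{0} // p.1 < p.2 ∧ p.2 < w1 ∧ fAR e p.1 p.2 = γ}
        ≤ 1 := by
          haveI := hss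
          exact Cardinal.mk_le_one_iff_set_subsingleton.2
            (fun a ha b hb => by
              have := hss.allEq ⟨a, ha⟩ ⟨b, hb⟩
              exact congrArg Subtype.val this)
      _ ≤ (k : Cardinal) := by exact_mod_cast hk

lemma homo_fAR {k : ℕ} (He : ∀ ξ, IsSeqK k (e ξ))
    (hsurj : ∀ D, IsSeqK k D → ∃ ξ, ξ < w1 ∧ e ξ = D) :
    ∀ D : ℕ → Finset (Finset Ordinal.{0}), IsSeqK k D →
      ∃ γ < w1, ∀ α, γ ≤ α → α < w1 → ∃ i, α ∈ HomoSet (D i) (fAR e) := by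
  intro D hD
  obtain ⟨ξ, hξ, heξ⟩ := hsurj D hD
  refine ⟨ξ + 1, ?_, ?_⟩
  · rw [Ordinal.add_one_eq_succ]
    exact w1_isLimit.succ_lt hξ
  intro α hγα hαw
  have hξα : ξ < α := by
    rw [Ordinal.add_one_eq_succ] at hγα
    exact Order.succ_le_iff.1 hγα
  have hα0 : 0 < α := (zero_le : (0 : Ordinal.{0}) ≤ ξ).trans_lt hξα
  obtain ⟨n, hn⟩ := enumLt_surj hαw hα0 hξα
  refine ⟨gIdx e α n, ?_⟩
  intro d hd δ hδ δ' hδ' hδα hδ'α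
  have hd' : d ∈ (e (enumLt α n)) (gIdx e α n) := by rw [hn, heξ]; exact hd
  have hVδ : δ ∈ V e α n := mem_famU.2 ⟨d, hd', hδ⟩
  have hVδ' : δ' ∈ V e α n := mem_famU.2 ⟨d, hd', hδ'⟩
  rw [fAR_eq1 e hδα hαw ⟨n, hVδ⟩, fAR_eq1 e hδ'α hαw ⟨n, hVδ'⟩,
    colN_unique e He hVδ, colN_unique e He hVδ',
    colD_unique e He hVδ hd' hδ, colD_unique e He hVδ' hd' hδ']

end Construction

end ARProof

/-- Lemma `const`. Assuming CH, for each `k ≥ 1` there exists an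
`AR^(k)`-function `f : [ω₁]² → ω₁`. -/
theorem ch_exists_ar_function
    (hCH : Cardinal.continuum.{0} = Cardinal.aleph 1) (k : ℕ) (hk : 1 ≤ k) :
    ∃ f : Ordinal.{0} → Ordinal.{0} → Ordinal.{0}, IsAR k f := by
  obtain ⟨e, He, hsurj⟩ := ARProof.exists_enum hCH k
  exact ⟨ARProof.fAR e, ARProof.kBdd_fAR e He hk, ARProof.homo_fAR e He hsurj⟩
end
end

section
/- If f : [ω₁]² → ω₁ is k-bounded (every colour class has size at most k), then for every function assigning to each ζ < ω₁ a finite set x_ζ ⊆ ω₁ with pairwise disjoint 'tails' x_ζ \ x (where {x_ζ} forms a Δ-system with root x), the set F(ζ) = {ξ < ω₁ : f''[x_ζ, x_ζ \ x] ∩ f''[x_ξ, x_ξ \ x] ≠ ∅, ξ ≠ ζ} is finite for each ζ, and hence there exists an uncountable F-free subset Z ⊆ ω₁ (i.e. ξ ∉ F(ζ) for all distinct ζ, ξ ∈ Z). -/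
noncomputable section
open Set

/-- The colour of the unordered pair `{a,b}` under the colouring `f` of ordered pairs. -/
def pc (f : Ordinal.{0} → Ordinal.{0} → Ordinal.{0}) (a b : Ordinal.{0}) : Ordinal.{0} :=
  if a < b then f a b else f b a

/-- The set of colours appearing on a pair `{a,b}` with `a ∈ s`, `b ∈ s \ root`. -/
def tailColours (f : Ordinal.{0} → Ordinal.{0} → Ordinal.{0})
    (s root : Finset Ordinal.{0}) : Set Ordinal.{0} :=
  {γ | ∃ a ∈ s, ∃ b ∈ s, b ∉ root ∧ a ≠ b ∧ pc f a b = γ}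

/-- The set mapping `F(ζ) = {ξ ≠ ζ : f''[x_ζ, x_ζ \ x] ∩ f''[x_ξ, x_ξ \ x] ≠ ∅}`. -/
def Fset (f : Ordinal.{0} → Ordinal.{0} → Ordinal.{0})
    (x : Ordinal.{0} → Finset Ordinal.{0}) (root : Finset Ordinal.{0})
    (ζ : Ordinal.{0}) : Set Ordinal.{0} :=
  {ξ | ξ < w1 ∧ ξ ≠ ζ ∧ (tailColours f (x ζ) root ∩ tailColours f (x ξ) root).Nonempty}

/- ### Auxiliary lemmas -/

lemma tailColours_finite (f : Ordinal.{0} → Ordinal.{0} → Ordinal.{0})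
    (s root : Finset Ordinal.{0}) : (tailColours f s root).Finite := by
  apply Set.Finite.subset (Set.Finite.image (fun p : Ordinal × Ordinal => pc f p.1 p.2)
    ((s ×ˢ s).finite_toSet))
  rintro γ ⟨a, ha, b, hb, -, -, hγ⟩
  exact ⟨(a, b), by simp [ha, hb], hγ⟩

lemma exists_pair {f : Ordinal.{0} → Ordinal.{0} → Ordinal.{0}} {s root : Finset Ordinal.{0}}
    {γ : Ordinal.{0}} (h : γ ∈ tailColours f s root) :
    ∃ p : Ordinal.{0} × Ordinal.{0},
      p.1 ∈ s ∧ p.2 ∈ s ∧ p.2 ∉ root ∧ p.1 ≠ p.2 ∧ pc f p.1 p.2 = γ := by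
  obtain ⟨a, ha, b, hb, h1, h2, h3⟩ := h
  exact ⟨(a, b), ha, hb, h1, h2, h3⟩

attribute [local instance] Classical.propDecidable

/-- A choice of a witnessing pair for a colour in `tailColours f s root`. -/
def pick (f : Ordinal.{0} → Ordinal.{0} → Ordinal.{0}) (s root : Finset Ordinal.{0})
    (γ : Ordinal.{0}) : Ordinal.{0} × Ordinal.{0} :=
  if h : γ ∈ tailColours f s root then (exists_pair h).choose else (0, 0)

lemma pick_spec {f : Ordinal.{0} → Ordinal.{0} → Ordinal.{0}} {s root : Finset Ordinal.{0}}
    {γ : Ordinal.{0}} (h : γ ∈ tailColours f s root) :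
    (pick f s root γ).1 ∈ s ∧ (pick f s root γ).2 ∈ s ∧ (pick f s root γ).2 ∉ root ∧
      (pick f s root γ).1 ≠ (pick f s root γ).2 ∧
      pc f (pick f s root γ).1 (pick f s root γ).2 = γ := by
  rw [pick, dif_pos h]
  exact (exists_pair h).choose_spec

lemma pc_minmax {f : Ordinal.{0} → Ordinal.{0} → Ordinal.{0}} {a b : Ordinal.{0}} (hab : a ≠ b) :
    min a b < max a b ∧ f (min a b) (max a b) = pc f a b := by
  rcases hab.lt_or_gt with h | h
  · rw [min_eq_left h.le, max_eq_right h.le, pc, if_pos h]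
    exact ⟨h, rfl⟩
  · rw [min_eq_right h.le, max_eq_left h.le, pc, if_neg (not_lt.2 h.le)]
    exact ⟨h, rfl⟩

/-- The colour class of `γ`, as a set of pairs. -/
def colourClass (f : Ordinal.{0} → Ordinal.{0} → Ordinal.{0}) (γ : Ordinal.{0}) :
    Set (Ordinal.{0} × Ordinal.{0}) :=
  {p | p.1 < p.2 ∧ p.2 < w1 ∧ f p.1 p.2 = γ}

lemma colourClass_finite {k : ℕ} {f : Ordinal.{0} → Ordinal.{0} → Ordinal.{0}}
    (hf : kBdd k f) (γ : Ordinal.{0}) : (colourClass f γ).Finite := by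
  rw [← Set.finite_coe_iff]
  exact Cardinal.lt_aleph0_iff_finite.mp (lt_of_le_of_lt (hf γ) (Cardinal.nat_lt_aleph0 k))

/-- If `f : [ω₁]² → ω₁` is `k`-bounded and `⟨x_ζ : ζ < ω₁⟩` is a
Δ-system of finite subsets of `ω₁` with root `x`, then each `F(ζ)` is finite, and there
is an uncountable `F`-free set `Z ⊆ ω₁`. -/
theorem kBdd_free_set (k : ℕ) (f : Ordinal.{0} → Ordinal.{0} → Ordinal.{0})
    (hf : kBdd k f)
    (x : Ordinal.{0} → Finset Ordinal.{0}) (root : Finset Ordinal.{0})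
    (hx : ∀ ζ < w1, ∀ a ∈ x ζ, a < w1)
    (hΔ : ∀ ζ ξ, ζ < w1 → ξ < w1 → ζ ≠ ξ →
      ∀ a : Ordinal.{0}, (a ∈ x ζ ∧ a ∈ x ξ) ↔ a ∈ root) :
    (∀ ζ < w1, (Fset f x root ζ).Finite) ∧
    ∃ Z : Set Ordinal.{0}, Z ⊆ Iio w1 ∧ ¬ Z.Countable ∧
      ∀ ζ ∈ Z, ∀ ξ ∈ Z, ζ ≠ ξ → ξ ∉ Fset f x root ζ := by
  -- Part 1: each `F(ζ)` is finite.
  have hfin : ∀ ζ < w1, (Fset f x root ζ).Finite := by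
    intro ζ hζ
    -- For each colour γ, the set of ξ having γ in their tail colours is finite.
    have key : ∀ γ : Ordinal.{0},
        {ξ | ξ < w1 ∧ γ ∈ tailColours f (x ξ) root}.Finite := by
      intro γ
      set G := {ξ | ξ < w1 ∧ γ ∈ tailColours f (x ξ) root} with hG
      -- map ξ to the sorted chosen pair
      set g : Ordinal.{0} → Ordinal.{0} × Ordinal.{0} := fun ξ =>
        (min (pick f (x ξ) root γ).1 (pick f (x ξ) root γ).2,
         max (pick f (x ξ) root γ).1 (pick f (x ξ) root γ).2) with hg
      have himg : g '' G ⊆ colourClass f γ := by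
        rintro p ⟨ξ, ⟨hξ, hγξ⟩, rfl⟩
        obtain ⟨h1, h2, h3, h4, h5⟩ := pick_spec hγξ
        obtain ⟨hlt, heq⟩ := pc_minmax (f := f) h4
        refine ⟨hlt, ?_, heq.trans h5⟩
        have hmm : max (pick f (x ξ) root γ).1 (pick f (x ξ) root γ).2 ∈ x ξ := by
          rcases le_total (pick f (x ξ) root γ).1 (pick f (x ξ) root γ).2 with h | h
          · rw [max_eq_right h]; exact h2
          · rw [max_eq_left h]; exact h1
        exact hx ξ hξ _ hmm
      have hinj : Set.InjOn g G := by
        rintro ξ ⟨hξ, hγξ⟩ ξ' ⟨hξ', hγξ'⟩ heq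
        by_contra hne
        obtain ⟨h1, h2, h3, h4, h5⟩ := pick_spec hγξ
        obtain ⟨h1', h2', h3', h4', h5'⟩ := pick_spec hγξ'
        -- the second component of the pick for ξ' lies in both x ξ and x ξ'
        set p := pick f (x ξ) root γ
        set q := pick f (x ξ') root γ
        have hmem : q.2 ∈ x ξ := by
          have e1 : min p.1 p.2 = min q.1 q.2 := congrArg Prod.fst heq
          have e2 : max p.1 p.2 = max q.1 q.2 := congrArg Prod.snd heq
          have : q.2 = min q.1 q.2 ∨ q.2 = max q.1 q.2 := by
            rcases le_total q.1 q.2 with h | h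
            · right; rw [max_eq_right h]
            · left; rw [min_eq_right h]
          rcases this with h | h
          · rw [h, ← e1]
            rcases le_total p.1 p.2 with hm | hm
            · rw [min_eq_left hm]; exact h1
            · rw [min_eq_right hm]; exact h2
          · rw [h, ← e2]
            rcases le_total p.1 p.2 with hm | hm
            · rw [max_eq_right hm]; exact h2
            · rw [max_eq_left hm]; exact h1
        exact h3' (((hΔ ξ ξ' hξ hξ' hne) q.2).mp ⟨hmem, h2'⟩)
      have : (g '' G).Finite := (colourClass_finite hf γ).subset himg
      exact Set.Finite.of_finite_image this hinj
    have hsub : Fset f x root ζ ⊆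
        ⋃ γ ∈ tailColours f (x ζ) root, {ξ | ξ < w1 ∧ γ ∈ tailColours f (x ξ) root} := by
      rintro ξ ⟨hξ, -, γ, hγζ, hγξ⟩
      exact Set.mem_biUnion hγζ ⟨hξ, hγξ⟩
    exact Set.Finite.subset (Set.Finite.biUnion (tailColours_finite f (x ζ) root)
      fun γ _ => key γ) hsub
  refine ⟨hfin, ?_⟩
  -- Part 2: an uncountable free set, via Zorn's lemma.
  set Free : Set (Set Ordinal.{0}) :=
    {Z | Z ⊆ Iio w1 ∧ ∀ ζ ∈ Z, ∀ ξ ∈ Z, ζ ≠ ξ → ξ ∉ Fset f x root ζ} with hFree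
  obtain ⟨m, -, hmax⟩ : ∃ m, ∅ ⊆ m ∧ Maximal (· ∈ Free) m := by
    apply zorn_subset_nonempty
    · intro c hc hchain hne
      refine ⟨⋃₀ c, ⟨?_, ?_⟩, fun s hs => Set.subset_sUnion_of_mem hs⟩
      · rintro ζ ⟨t, ht, hζ⟩
        exact (hc ht).1 hζ
      · rintro ζ ⟨t, ht, hζ⟩ ξ ⟨t', ht', hξ⟩ hne'
        rcases hchain.total ht ht' with h | h
        · exact (hc ht').2 ζ (h hζ) ξ hξ hne'
        · exact (hc ht).2 ζ hζ ξ (h hξ) hne'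
    · exact ⟨Set.empty_subset _, by simp⟩
  obtain ⟨hmsub, hmfree⟩ := hmax.1
  refine ⟨m, hmsub, ?_, hmfree⟩
  -- m must be uncountable
  intro hcount
  have hSc : (m ∪ ⋃ ζ ∈ m, Fset f x root ζ).Countable :=
    hcount.union (Set.Countable.biUnion hcount fun ζ hζ =>
      (hfin ζ (hmsub hζ)).countable)
  have hIio : ¬ (Iio w1 : Set Ordinal.{0}).Countable := by
    intro h
    have := h.to_subtype
    have h1 : Cardinal.mk (Iio w1 : Set Ordinal.{0}) ≤ Cardinal.aleph0 :=
      Cardinal.mk_le_aleph0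
    rw [Ordinal.mk_Iio_ordinal] at h1
    have : (w1).card ≤ Cardinal.aleph0 := by
      rw [← Cardinal.lift_le.{1}]
      simpa using h1
    rw [w1, Cardinal.card_ord] at this
    exact absurd this (not_le.mpr Cardinal.aleph0_lt_aleph_one)
  obtain ⟨ξ, hξIio, hξS⟩ : ∃ ξ, ξ ∈ Iio w1 \ (m ∪ ⋃ ζ ∈ m, Fset f x root ζ) := by
    by_contra h
    push_neg at h
    exact hIio (hSc.mono fun ζ hζ => by
      by_contra hc; exact (h ζ) ⟨hζ, hc⟩)
  -- m ∪ {ξ} is free, contradicting maximality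
  have hfree' : m ∪ {ξ} ∈ Free := by
    refine ⟨Set.union_subset hmsub (by simpa using hξIio), ?_⟩
    rintro ζ (hζ | hζ) ξ' (hξ' | hξ') hne'
    · exact hmfree ζ hζ ξ' hξ' hne'
    · -- ξ' = ξ : ξ ∉ Fset ζ since ξ ∉ ⋃
      rcases hξ'
      intro hcon
      exact hξS (Set.mem_union_right _ (Set.mem_biUnion hζ hcon))
    · -- ζ = ξ : use symmetry of Fset
      rcases hζ
      rintro ⟨hξ'1, hξ'2, hγ⟩
      have : ξ ∈ Fset f x root ξ' :=
        ⟨hξIio, hξ'2.symm, hγ.imp fun γ ⟨ha, hb⟩ => ⟨hb, ha⟩⟩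
      exact hξS (Set.mem_union_right _ (Set.mem_biUnion hξ' this))
    · rcases hζ; rcases hξ'; exact absurd rfl hne'
  have hsub' := hmax.2 hfree' (Set.subset_union_left)
  have hmemm : ξ ∈ m := hsub' (Set.mem_union_right _ rfl)
  exact hξS (Set.mem_union_left _ hmemm)

end
end

section
/- Galvin's implication: if λ → (α)ⁿ_k (every k-colouring of [λ]ⁿ has a homogeneous set of order type α), then λ →* (α)ⁿ_{k-bdd}: for every k-bounded colouring f of [λ]ⁿ there is a rainbow set of order type α (a set on which f is injective). -/
noncomputable section
open Set

/-- `S` has order type `a`. -/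
def HasOtype (S : Set Ordinal.{0}) (a : Ordinal.{0}) : Prop :=
  Nonempty (S ≃o Iio a)

/-- `l → (α)ⁿ_k`: every colouring of the `n`-element subsets of `l` with `k` colours has a
homogeneous set of order type `α`. -/
def ArrowRel (l α : Ordinal.{0}) (n k : ℕ) : Prop :=
  ∀ g : Finset Ordinal.{0} → Fin k,
    ∃ H : Set Ordinal.{0}, H ⊆ Iio l ∧ HasOtype H α ∧
      ∃ i : Fin k, ∀ s : Finset Ordinal.{0}, ↑s ⊆ H → s.card = n → g s = i

/-- Galvin. If `l → (α)ⁿ_k`, then `l →* (α)ⁿ_{k-bdd}`: every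
`k`-bounded colouring of the `n`-element subsets of `l` admits a rainbow set of order
type `α`. -/
theorem galvin_rainbow (l α : Ordinal.{0}) (n k : ℕ) (hk : 1 ≤ k)
    (harrow : ArrowRel l α n k) :
    ∀ (C : Type 1) (f : Finset Ordinal.{0} → C),
      (∀ c : C,
        Cardinal.mk {s : Finset Ordinal.{0} // ↑s ⊆ Iio l ∧ s.card = n ∧ f s = c} ≤ k) →
      ∃ P : Set Ordinal.{0}, P ⊆ Iio l ∧ HasOtype P α ∧
        ∀ s t : Finset Ordinal.{0}, ↑s ⊆ P → ↑t ⊆ P → s.card = n → t.card = n →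
          f s = f t → s = t := by
  intro C f hbdd
  classical
  have hemb : ∀ c : C, ∃ e : {s : Finset Ordinal.{0} // ↑s ⊆ Iio l ∧ s.card = n ∧ f s = c} → Fin k,
      Function.Injective e := by
    intro c
    have hle := hbdd c
    have h2 : (k : Cardinal.{1}) = Cardinal.mk (ULift.{1} (Fin k)) := by
      simp [Cardinal.mk_uLift]
    rw [h2, Cardinal.le_def] at hle
    obtain ⟨e⟩ := hle
    exact ⟨fun x => (e x).down, ULift.down_injective.comp e.injective⟩
  choose e he using hemb
  set g : Finset Ordinal.{0} → Fin k := fun s =>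
    if h : ↑s ⊆ Iio l ∧ s.card = n then e (f s) ⟨s, h.1, h.2, rfl⟩ else ⟨0, hk⟩ with hg
  obtain ⟨H, hH, hot, i, hi⟩ := harrow g
  refine ⟨H, hH, hot, ?_⟩
  intro s t hs ht hsn htn hft
  have hsl : ↑s ⊆ Iio l := hs.trans hH
  have htl : ↑t ⊆ Iio l := ht.trans hH
  have h1 := hi s hs hsn
  have h2 := hi t ht htn
  have hgs : g s = e (f s) ⟨s, hsl, hsn, rfl⟩ := by simp [hg, hsl, hsn]
  have hgt : g t = e (f t) ⟨t, htl, htn, rfl⟩ := by simp [hg, htl, htn]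
  have key : ∀ (c c' : C) (h : c = c') (p : f t = c) (p' : f t = c'),
      e c ⟨t, htl, htn, p⟩ = e c' ⟨t, htl, htn, p'⟩ := by
    intro c c' h p p'
    subst h
    rfl
  have heq : e (f s) ⟨s, hsl, hsn, rfl⟩ = e (f s) ⟨t, htl, htn, hft.symm⟩ := by
    rw [key (f s) (f t) hft hft.symm rfl, ← hgs, ← hgt, h1, h2]
  have := he (f s) heq
  exact congrArg Subtype.val this
end
end

section
/- If c : [ω₁]² → ω₁ and the graph H_c on ω₁ × K (with K = [ω₁]^k × ω₁ × ω, edges defined via conditions (1)–(5) with respect to a fixed ω₁-chain rank function ρ and a disjointness-coding function r) is 1-solid, then c establishes ω₁ ↛* [(ω₁;ω₁)]_{k-bdd}: for every uncountable X = {ξ_β : β < ω₁} ⊆ ω₁ and every uncountable pairwise-disjoint family {d_α : α < ω₁} of k-element subsets of ω₁, there are α, β with max d_α < ξ_β and |c''[d_α, {ξ_β}]| = 1. -/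
noncomputable section
open Set FirstOrder

def toZF : Ordinal.{0} → ZFSet.{0} :=
  Ordinal.lt_wf.fix (C := fun _ => ZFSet.{0}) fun o ih =>
    ZFSet.range fun i : Shrink (Iio o) =>
      ih ((equivShrink (Iio o)).symm i) ((equivShrink (Iio o)).symm i).2

def SetLang : Language := ⟨fun _ => Empty, fun n => match n with | 2 => Bool | _ => Empty⟩

def setStruct (prec : ZFSet.{0} → ZFSet.{0} → Prop) : SetLang.Structure ZFSet.{0} where
  funMap := fun {_} f _ => Empty.elim f
  RelMap := fun {n} r x =>
    match n, r, x with
    | 2, true, x => x 0 ∈ x 1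
    | 2, false, x => prec (x 0) (x 1)

abbrev ESub (prec : ZFSet.{0} → ZFSet.{0} → Prop) : Type 1 :=
  @Language.ElementarySubstructure SetLang ZFSet.{0} (setStruct prec)

def carr {prec : ZFSet.{0} → ZFSet.{0} → Prop} (N : ESub prec) : Set ZFSet.{0} :=
  letI := setStruct prec
  N.toSubstructure.carrier

def ctblToZF (s : Set ZFSet.{0}) (hs : s.Countable) : ZFSet.{0} :=
  letI : Countable s := hs.to_subtype
  ZFSet.range fun i : Shrink.{0} s => ((equivShrink.{0} s).symm i : ZFSet)

def fun2ToZF (f : Ordinal.{0} → Ordinal.{0} → Ordinal.{0}) : ZFSet.{0} :=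
  ZFSet.range fun p : Shrink (Iio w1) × Shrink (Iio w1) =>
    ZFSet.pair
      (ZFSet.pair (toZF ((equivShrink (Iio w1)).symm p.1))
        (toZF ((equivShrink (Iio w1)).symm p.2)))
      (toZF (f ((equivShrink (Iio w1)).symm p.1) ((equivShrink (Iio w1)).symm p.2)))

def finsetToZF (s : Finset Ordinal.{0}) : ZFSet.{0} :=
  ZFSet.range fun i : Shrink.{0} {x // x ∈ s} => toZF ((equivShrink.{0} {x // x ∈ s}).symm i : {x // x ∈ s})

def famToZF (D : Finset (Finset Ordinal.{0})) : ZFSet.{0} :=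
  ZFSet.range fun i : Shrink.{0} {x // x ∈ D} => finsetToZF ((equivShrink.{0} {x // x ∈ D}).symm i : {x // x ∈ D})

def seqToZF (D : ℕ → Finset (Finset Ordinal.{0})) : ZFSet.{0} :=
  ZFSet.range fun n : ℕ => ZFSet.pair (toZF n) (famToZF (D n))

/-- The edge condition of the graph `H_c` for vertices `x = ⟨ζ,⟨d,ξ,m⟩⟩`,
`y = ⟨ζ',⟨d',ξ',m'⟩⟩` with `ζ < ζ'`: if `m = m'`, `ρ(ξ') = ζ'`, `ζ < min d` and
`r({ζ} ∪ d) = m`, then `c` is constant on the pairs `{δ,ξ'}`, `δ ∈ d`. -/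
def EdgeCond (c : Ordinal.{0} → Ordinal.{0} → Ordinal.{0})
    (ρ : Ordinal.{0} → Ordinal.{0}) (r : Finset Ordinal.{0} → ℕ)
    (x y : Ordinal.{0} × (Finset Ordinal.{0} × Ordinal.{0} × ℕ)) : Prop :=
  (x.2.2.2 = y.2.2.2 ∧ ρ y.2.2.1 = y.1 ∧ (∀ δ ∈ x.2.1, x.1 < δ) ∧
      r (insert x.1 x.2.1) = x.2.2.2) →
    ∀ δ ∈ x.2.1, ∀ ε ∈ x.2.1, c δ y.2.2.1 = c ε y.2.2.1

/-- Adjacency in the graph `H_c` on `ω₁ × K`, `K = [ω₁]^k × ω₁ × ω`. -/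
def HcAdj (c : Ordinal.{0} → Ordinal.{0} → Ordinal.{0})
    (ρ : Ordinal.{0} → Ordinal.{0}) (r : Finset Ordinal.{0} → ℕ)
    (x y : Ordinal.{0} × (Finset Ordinal.{0} × Ordinal.{0} × ℕ)) : Prop :=
  (x.1 < y.1 ∧ EdgeCond c ρ r x y) ∨ (y.1 < x.1 ∧ EdgeCond c ρ r y x)

namespace Aux
open Ordinal Cardinal

lemma w1_isLimit : Order.IsSuccLimit w1 := Cardinal.isSuccLimit_ord (Cardinal.aleph0_le_aleph 1)
lemma cof_w1 : w1.cof = Cardinal.aleph 1 := Cardinal.isRegular_aleph_one.cof_eq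

lemma bsup_lt_w1 {ν : Ordinal.{0}} (hν : ν < w1) (f : ∀ a < ν, Ordinal.{0})
    (hf : ∀ i hi, f i hi < w1) : Ordinal.bsup ν f < w1 := by
  refine Ordinal.bsup_lt_ord ?_ hf
  rw [cof_w1]
  exact Cardinal.lt_ord.mp hν

lemma countable_Iio {S : Ordinal.{0}} (h : S < w1) : (Set.Iio S).Countable := by
  rw [← Cardinal.le_aleph0_iff_set_countable, Ordinal.mk_Iio_ordinal]
  have : S.card < Cardinal.aleph 1 := Cardinal.lt_ord.mp h
  rw [← Cardinal.succ_aleph0, Order.lt_succ_iff] at this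
  calc Cardinal.lift.{1} S.card ≤ Cardinal.lift.{1} ℵ₀ := Cardinal.lift_le.mpr this
    _ = ℵ₀ := Cardinal.lift_aleph0

lemma countable_Iic {S : Ordinal.{0}} (h : S < w1) : (Set.Iic S).Countable := by
  have h1 : S + 1 < w1 := w1_isLimit.succ_lt h
  exact (countable_Iio h1).mono (fun x hx => lt_of_le_of_lt hx (lt_add_one S))

lemma not_countable_Iio : ¬ (Set.Iio w1).Countable := by
  intro h
  rw [← Cardinal.le_aleph0_iff_set_countable, Ordinal.mk_Iio_ordinal] at h
  rw [show w1.card = Cardinal.aleph 1 from Cardinal.card_ord _] at h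
  have h2 : Cardinal.lift.{1} (Cardinal.aleph 1) ≤ Cardinal.lift.{1} ℵ₀ := by
    rwa [Cardinal.lift_aleph0]
  rw [Cardinal.lift_le] at h2
  exact absurd h2 (not_le.mpr Cardinal.aleph0_lt_aleph_one)

lemma exists_notin {T : Set Ordinal.{0}} (h : T.Countable) : ∃ b, b < w1 ∧ b ∉ T := by
  by_contra hc
  push_neg at hc
  exact not_countable_Iio (h.mono hc)

lemma toZF_eq (o : Ordinal.{0}) : toZF o = ZFSet.range fun i : Shrink (Iio o) =>
    toZF ((equivShrink (Iio o)).symm i : Ordinal) := by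
  show Ordinal.lt_wf.fix _ o = _
  rw [WellFounded.fix_eq]
  rfl

lemma toZF_mem {a b : Ordinal.{0}} (h : a < b) : toZF a ∈ toZF b := by
  rw [toZF_eq b, ZFSet.mem_range]
  exact ⟨equivShrink (Iio b) ⟨a, h⟩, by simp⟩

lemma toZF_injective : Function.Injective toZF := by
  intro a b hab
  by_contra hne
  rcases Ne.lt_or_gt hne with h | h
  · have h2 := toZF_mem h; rw [hab] at h2; exact ZFSet.mem_irrefl _ h2
  · have h2 := toZF_mem h; rw [hab] at h2; exact ZFSet.mem_irrefl _ h2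

lemma exists_fiber (q : Ordinal.{0} → ℕ) : ∃ m, ¬ ({ν | ν < w1 ∧ q ν = m}).Countable := by
  by_contra hc
  push_neg at hc
  have : (Set.Iio w1).Countable := by
    refine (Set.countable_iUnion hc).mono ?_
    intro ν hν
    exact Set.mem_iUnion.mpr ⟨q ν, hν, rfl⟩
  exact not_countable_Iio this

section Rec1
variable (ξs : Ordinal.{0} → Ordinal.{0}) (d : Ordinal.{0} → Finset Ordinal.{0})
  (ρ : Ordinal.{0} → Ordinal.{0})

def bnd (p : Ordinal.{0} × Ordinal.{0}) : Ordinal.{0} :=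
  max (ξs p.1) (max (ρ (ξs p.1)) ((d p.2).sup id))

open scoped Classical in
def chooseB (S : Ordinal.{0}) : Ordinal.{0} :=
  if h : ∃ b, b < w1 ∧ S < ξs b ∧ S < ρ (ξs b) then h.choose else 0

open scoped Classical in
def chooseA (t : Ordinal.{0}) : Ordinal.{0} :=
  if h : ∃ a, a < w1 ∧ ∀ δ ∈ d a, t < δ then h.choose else 0

lemma chooseB_spec {S : Ordinal.{0}} (h : ∃ b, b < w1 ∧ S < ξs b ∧ S < ρ (ξs b)) :
    chooseB ξs ρ S < w1 ∧ S < ξs (chooseB ξs ρ S) ∧ S < ρ (ξs (chooseB ξs ρ S)) := by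
  rw [chooseB, dif_pos h]
  exact h.choose_spec

lemma chooseA_spec {t : Ordinal.{0}} (h : ∃ a, a < w1 ∧ ∀ δ ∈ d a, t < δ) :
    chooseA d t < w1 ∧ ∀ δ ∈ d (chooseA d t), t < δ := by
  rw [chooseA, dif_pos h]
  exact h.choose_spec

def F : Ordinal.{0} → Ordinal.{0} × Ordinal.{0} :=
  Ordinal.lt_wf.fix (C := fun _ => Ordinal.{0} × Ordinal.{0}) fun ν ih =>
    let b := chooseB ξs ρ (Ordinal.bsup ν fun ι h => bnd ξs d ρ (ih ι h))
    (b, chooseA d (ρ (ξs b)))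

def Sb (ν : Ordinal.{0}) : Ordinal.{0} :=
  Ordinal.bsup ν fun ι _ => bnd ξs d ρ (F ξs d ρ ι)

lemma F_eq (ν : Ordinal.{0}) :
    F ξs d ρ ν = (chooseB ξs ρ (Sb ξs d ρ ν),
      chooseA d (ρ (ξs (chooseB ξs ρ (Sb ξs d ρ ν))))) := by
  show Ordinal.lt_wf.fix _ ν = _
  rw [WellFounded.fix_eq]
  rfl

lemma rec1 (hξw : ∀ b < w1, ξs b < w1) (hρw : ∀ ξ < w1, ρ ξ < w1)
    (hdw : ∀ a < w1, ∀ δ ∈ d a, δ < w1)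
    (hβ : ∀ S < w1, ∃ b, b < w1 ∧ S < ξs b ∧ S < ρ (ξs b))
    (hα : ∀ t < w1, ∃ a, a < w1 ∧ ∀ δ ∈ d a, t < δ) :
    ∀ ν < w1, (F ξs d ρ ν).1 < w1 ∧ (F ξs d ρ ν).2 < w1 ∧
      (∀ δ ∈ d ((F ξs d ρ ν).2), ρ (ξs ((F ξs d ρ ν).1)) < δ) ∧
      ∀ ι < ν, ρ (ξs ((F ξs d ρ ι).1)) < ρ (ξs ((F ξs d ρ ν).1)) ∧
        (∀ δ ∈ d ((F ξs d ρ ι).2), δ < ξs ((F ξs d ρ ν).1)) := by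
  intro ν
  induction ν using Ordinal.induction with
  | h ν IH =>
    intro hν
    have hSb : Sb ξs d ρ ν < w1 := by
      apply bsup_lt_w1 hν
      intro ι hι
      obtain ⟨h1, h2, -, -⟩ := IH ι hι (hι.trans hν)
      have hx : ξs ((F ξs d ρ ι).1) < w1 := hξw _ h1
      have hr : ρ (ξs ((F ξs d ρ ι).1)) < w1 := hρw _ hx
      have hs : (d ((F ξs d ρ ι).2)).sup id < w1 := by
        rw [Finset.sup_lt_iff (by simpa using w1_isLimit.pos)]
        exact fun δ hδ => hdw _ h2 δ hδ
      simp only [bnd, max_lt_iff]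
      exact ⟨hx, hr, hs⟩
    have hB := chooseB_spec ξs ρ (hβ _ hSb)
    have hbw : chooseB ξs ρ (Sb ξs d ρ ν) < w1 := hB.1
    have hA := chooseA_spec d (hα _ (hρw _ (hξw _ hbw)))
    have hle : ∀ ι < ν, bnd ξs d ρ (F ξs d ρ ι) ≤ Sb ξs d ρ ν := fun ι hι =>
      Ordinal.le_bsup (fun ι _ => bnd ξs d ρ (F ξs d ρ ι)) ι hι
    rw [F_eq ξs d ρ ν]
    refine ⟨hB.1, hA.1, hA.2, ?_⟩
    intro ι hι
    constructor
    · refine lt_of_le_of_lt ?_ hB.2.2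
      refine le_trans ?_ (hle ι hι)
      simp [bnd]
    · intro δ hδ
      refine lt_of_le_of_lt ?_ hB.2.1
      refine le_trans ?_ (hle ι hι)
      calc δ = id δ := rfl
        _ ≤ (d ((F ξs d ρ ι).2)).sup id := Finset.le_sup hδ
        _ ≤ bnd ξs d ρ (F ξs d ρ ι) := by simp [bnd]
end Rec1

section Rec2
variable (Fm : Set Ordinal.{0})

open scoped Classical in
def chooseE (S : Ordinal.{0}) : Ordinal.{0} :=
  if h : ∃ x, x ∈ Fm ∧ S < x then h.choose else 0

lemma chooseE_spec {S : Ordinal.{0}} (h : ∃ x, x ∈ Fm ∧ S < x) :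
    chooseE Fm S ∈ Fm ∧ S < chooseE Fm S := by
  rw [chooseE, dif_pos h]
  exact h.choose_spec

def E : Ordinal.{0} → Ordinal.{0} :=
  Ordinal.lt_wf.fix (C := fun _ => Ordinal.{0}) fun ν ih =>
    chooseE Fm (Ordinal.bsup ν fun ι h => ih ι h)

lemma E_eq (ν : Ordinal.{0}) :
    E Fm ν = chooseE Fm (Ordinal.bsup ν fun ι _ => E Fm ι) := by
  show Ordinal.lt_wf.fix _ ν = _
  rw [WellFounded.fix_eq]
  rfl

lemma rec2 (hsub : Fm ⊆ Set.Iio w1) (hub : ∀ S < w1, ∃ x, x ∈ Fm ∧ S < x) :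
    ∀ ν < w1, E Fm ν ∈ Fm ∧ ∀ ι < ν, E Fm ι < E Fm ν := by
  intro ν
  induction ν using Ordinal.induction with
  | h ν IH =>
    intro hν
    have hS : Ordinal.bsup ν (fun ι _ => E Fm ι) < w1 := by
      apply bsup_lt_w1 hν
      intro ι hι
      exact hsub (IH ι hι (hι.trans hν)).1
    have hE := chooseE_spec Fm (hub _ hS)
    rw [E_eq]
    refine ⟨hE.1, fun ι hι => lt_of_le_of_lt ?_ hE.2⟩
    exact Ordinal.le_bsup (fun ι _ => E Fm ι) ι hι
end Rec2
end Aux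

/-- If the graph `H_c` (defined from a colouring `c`, the rank function
`ρ` of an `ω₁`-chain of countable elementary submodels, and a coding function `r`) is
`1`-solid, then `c` establishes `ω₁ ↛* [(ω₁;ω₁)]_{k-bdd}`: for every uncountable
`{ξ_β : β < ω₁} ⊆ ω₁` and every uncountable pairwise disjoint family of `k`-element sets
`{d_α : α < ω₁}`, there are `α, β` with `max d_α < ξ_β` and `|c''[d_α,{ξ_β}]| = 1`. -/
theorem one_solid_establishes (k : ℕ) (hk : 1 ≤ k)
    (c : Ordinal.{0} → Ordinal.{0} → Ordinal.{0})
    (prec : ZFSet.{0} → ZFSet.{0} → Prop) (hwo : IsWellOrder ZFSet.{0} prec)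
    (N : Ordinal.{0} → ESub prec)
    (hcount : ∀ ξ < w1, (carr (N ξ)).Countable)
    (hchain : ∀ ξ η (hξη : ξ < η) (hη : η < w1),
      ctblToZF (carr (N ξ)) (hcount ξ (hξη.trans hη)) ∈ carr (N η))
    (ρ : Ordinal.{0} → Ordinal.{0})
    (hρw : ∀ ξ < w1, ρ ξ < w1)
    (hρ : ∀ ξ < w1, toZF ξ ∈ carr (N (ρ ξ)) ∧ ∀ ν < ρ ξ, toZF ξ ∉ carr (N ν))
    (r : Finset Ordinal.{0} → ℕ)
    (hr : ∀ A B : Finset Ordinal.{0}, ∀ (hA : A.Nonempty) (hB : B.Nonempty),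
      A.min' hA ≠ B.min' hB → r A = r B → ∀ x ∈ A, x ∉ B)
    (hsolid : ∀ s : Ordinal.{0} → Ordinal.{0} × (Finset Ordinal.{0} × Ordinal.{0} × ℕ),
      (∀ ν < w1, (s ν).1 < w1 ∧ (s ν).2.1.card = k ∧ (∀ δ ∈ (s ν).2.1, δ < w1) ∧
        (s ν).2.2.1 < w1) →
      (∀ ν μ : Ordinal.{0}, ν < w1 → μ < w1 → ν ≠ μ → (s ν).1 ≠ (s μ).1) →
      ∃ ν μ : Ordinal.{0}, ν < μ ∧ μ < w1 ∧ HcAdj c ρ r (s ν) (s μ)) :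
    ∀ ξs : Ordinal.{0} → Ordinal.{0},
      (∀ β < w1, ξs β < w1) →
      (∀ β β' : Ordinal.{0}, β < w1 → β' < w1 → β ≠ β' → ξs β ≠ ξs β') →
      ∀ d : Ordinal.{0} → Finset Ordinal.{0},
        (∀ a < w1, (d a).card = k ∧ ∀ δ ∈ d a, δ < w1) →
        (∀ a a' : Ordinal.{0}, a < w1 → a' < w1 → a ≠ a' → ∀ x ∈ d a, x ∉ d a') →
        ∃ a β : Ordinal.{0}, a < w1 ∧ β < w1 ∧ (∀ δ ∈ d a, δ < ξs β) ∧
          ∃ γ, ∀ δ ∈ d a, c δ (ξs β) = γ := by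
  intro ξs hξw hinj d hd hdisj
  classical
  have hdw : ∀ a < w1, ∀ δ ∈ d a, δ < w1 := fun a ha => (hd a ha).2
  -- a globally injective modification of ξs
  set g : Ordinal.{0} → Ordinal.{0} := fun b => if b < w1 then ξs b else w1 + b with hg
  have hginj : Function.Injective g := by
    intro x y hxy
    by_contra hne
    simp only [hg] at hxy
    by_cases hx : x < w1 <;> by_cases hy : y < w1
    · rw [if_pos hx, if_pos hy] at hxy
      exact hinj x y hx hy hne hxy
    · rw [if_pos hx, if_neg hy] at hxy
      exact absurd hxy (ne_of_lt (lt_of_lt_of_le (hξw x hx) le_self_add))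
    · rw [if_neg hx, if_pos hy] at hxy
      exact absurd hxy.symm (ne_of_lt (lt_of_lt_of_le (hξw y hy) le_self_add))
    · rw [if_neg hx, if_neg hy] at hxy
      exact hne ((add_left_cancel_iff (a := w1)).mp hxy)
  have hβ : ∀ S < w1, ∃ b, b < w1 ∧ S < ξs b ∧ S < ρ (ξs b) := by
    intro S hS
    have hc1 : {b | b < w1 ∧ ξs b ≤ S}.Countable := by
      refine ((Aux.countable_Iic hS).preimage hginj).mono ?_
      rintro b ⟨hb1, hb2⟩
      show g b ∈ Set.Iic S
      simp only [hg, if_pos hb1]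
      exact hb2
    have hU : (⋃ ν ∈ Set.Iic S, carr (N ν)).Countable :=
      (Aux.countable_Iic hS).biUnion (fun ν hν => hcount ν (lt_of_le_of_lt hν hS))
    have hc2 : {b | b < w1 ∧ ρ (ξs b) ≤ S}.Countable := by
      refine (hU.preimage (Aux.toZF_injective.comp hginj)).mono ?_
      rintro b ⟨hb1, hb2⟩
      show toZF (g b) ∈ ⋃ ν ∈ Set.Iic S, carr (N ν)
      simp only [hg, if_pos hb1]
      exact Set.mem_biUnion hb2 (hρ (ξs b) (hξw b hb1)).1
    obtain ⟨b, hbw, hbn⟩ := Aux.exists_notin (hc1.union hc2)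
    refine ⟨b, hbw, ?_, ?_⟩
    · by_contra hcon
      exact hbn (Set.mem_union_left _ ⟨hbw, not_lt.mp hcon⟩)
    · by_contra hcon
      exact hbn (Set.mem_union_right _ ⟨hbw, not_lt.mp hcon⟩)
  have hα : ∀ t < w1, ∃ a, a < w1 ∧ ∀ δ ∈ d a, t < δ := by
    intro t ht
    set f : Ordinal.{0} → Ordinal.{0} :=
      fun a => if h : a < w1 ∧ ∃ δ ∈ d a, δ ≤ t then h.2.choose else w1 + a with hf
    have hfmem : ∀ a, ∀ h : a < w1 ∧ ∃ δ ∈ d a, δ ≤ t, f a ∈ d a ∧ f a ≤ t := by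
      intro a h
      simp only [hf, dif_pos h]
      exact h.2.choose_spec
    have hfinj : Function.Injective f := by
      intro x y hxy
      by_contra hne
      by_cases hx : x < w1 ∧ ∃ δ ∈ d x, δ ≤ t <;> by_cases hy : y < w1 ∧ ∃ δ ∈ d y, δ ≤ t
      · have h1 := (hfmem x hx).1
        have h2 := (hfmem y hy).1
        rw [hxy] at h1
        exact hdisj y x hy.1 hx.1 (Ne.symm hne) _ h2 h1
      · have h1 := (hfmem x hx).2
        have h2 : f y = w1 + y := by simp only [hf, dif_neg hy]
        rw [hxy, h2] at h1
        exact absurd h1 (not_le.mpr (lt_of_lt_of_le ht le_self_add))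
      · have h1 := (hfmem y hy).2
        have h2 : f x = w1 + x := by simp only [hf, dif_neg hx]
        rw [← hxy, h2] at h1
        exact absurd h1 (not_le.mpr (lt_of_lt_of_le ht le_self_add))
      · have h2 : f x = w1 + x := by simp only [hf, dif_neg hx]
        have h3 : f y = w1 + y := by simp only [hf, dif_neg hy]
        rw [h2, h3] at hxy
        exact hne ((add_left_cancel_iff (a := w1)).mp hxy)
    have hcB : {a | a < w1 ∧ ∃ δ ∈ d a, δ ≤ t}.Countable := by
      refine ((Aux.countable_Iic ht).preimage hfinj).mono ?_
      intro a ha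
      show f a ∈ Set.Iic t
      exact (hfmem a ha).2
    obtain ⟨a, haw, han⟩ := Aux.exists_notin hcB
    refine ⟨a, haw, ?_⟩
    intro δ hδ
    by_contra hcon
    exact han ⟨haw, δ, hδ, not_lt.mp hcon⟩
  -- the main recursion
  have hinv := Aux.rec1 ξs d ρ hξw hρw hdw hβ hα
  -- pigeonhole for the value of r
  set q : Ordinal.{0} → ℕ :=
    fun ν => r (insert (ρ (ξs ((Aux.F ξs d ρ ν).1))) (d ((Aux.F ξs d ρ ν).2))) with hq
  obtain ⟨m, hm⟩ := Aux.exists_fiber q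
  set Fm : Set Ordinal.{0} := {ν | ν < w1 ∧ q ν = m} with hFm
  have hsub : Fm ⊆ Set.Iio w1 := fun ν hν => hν.1
  have hub : ∀ S < w1, ∃ x, x ∈ Fm ∧ S < x := by
    intro S hS
    by_contra hcon
    push_neg at hcon
    exact hm ((Aux.countable_Iic hS).mono (fun x hx => hcon x hx))
  have hEinv := Aux.rec2 Fm hsub hub
  -- the sequence for 1-solidity
  set s : Ordinal.{0} → Ordinal.{0} × (Finset Ordinal.{0} × Ordinal.{0} × ℕ) :=
    fun ν => (ρ (ξs ((Aux.F ξs d ρ (Aux.E Fm ν)).1)),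
      (d ((Aux.F ξs d ρ (Aux.E Fm ν)).2), ξs ((Aux.F ξs d ρ (Aux.E Fm ν)).1), m)) with hs
  have hEw : ∀ ν < w1, Aux.E Fm ν < w1 := fun ν hν => (hEinv ν hν).1.1
  have hmono : ∀ ν μ, ν < μ → μ < w1 → (s ν).1 < (s μ).1 := by
    intro ν μ hνμ hμ
    have hE : Aux.E Fm ν < Aux.E Fm μ := (hEinv μ hμ).2 ν hνμ
    exact ((hinv (Aux.E Fm μ) (hEw μ hμ)).2.2.2 (Aux.E Fm ν) hE).1
  have hcond1 : ∀ ν < w1, (s ν).1 < w1 ∧ (s ν).2.1.card = k ∧ (∀ δ ∈ (s ν).2.1, δ < w1) ∧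
      (s ν).2.2.1 < w1 := by
    intro ν hν
    have hF := hinv (Aux.E Fm ν) (hEw ν hν)
    exact ⟨hρw _ (hξw _ hF.1), (hd _ hF.2.1).1, (hd _ hF.2.1).2, hξw _ hF.1⟩
  have hcond2 : ∀ ν μ : Ordinal.{0}, ν < w1 → μ < w1 → ν ≠ μ → (s ν).1 ≠ (s μ).1 := by
    intro ν μ hν hμ hne
    rcases hne.lt_or_gt with h | h
    · exact ne_of_lt (hmono ν μ h hμ)
    · exact (ne_of_lt (hmono μ ν h hν)).symm
  obtain ⟨ν, μ, hνμ, hμw, hadj⟩ := hsolid s hcond1 hcond2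
  · have hνw : ν < w1 := hνμ.trans hμw
    have hedge : EdgeCond c ρ r (s ν) (s μ) := by
      rcases hadj with ⟨-, h⟩ | ⟨h1, -⟩
      · exact h
      · exact absurd (hmono ν μ hνμ hμw) (asymm h1)
    have hFν := hinv (Aux.E Fm ν) (hEw ν hνw)
    have hFμ := hinv (Aux.E Fm μ) (hEw μ hμw)
    have hcc := hedge ⟨rfl, rfl, hFν.2.2.1, (hEinv ν hνw).1.2⟩
    refine ⟨(Aux.F ξs d ρ (Aux.E Fm ν)).2, (Aux.F ξs d ρ (Aux.E Fm μ)).1,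
      hFν.2.1, hFμ.1, ?_, ?_⟩
    · exact (hFμ.2.2.2 (Aux.E Fm ν) ((hEinv μ hμw).2 ν hνμ)).2
    · have hne : (d ((Aux.F ξs d ρ (Aux.E Fm ν)).2)).Nonempty := by
        rw [← Finset.card_pos, (hd _ hFν.2.1).1]
        omega
      obtain ⟨δ0, hδ0⟩ := hne
      exact ⟨c δ0 (ξs ((Aux.F ξs d ρ (Aux.E Fm μ)).1)), fun δ hδ => hcc δ hδ δ0 hδ0⟩
end
end
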